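/- arXiv:2412.12659 — 7 statements merged into one kernel-verified Lean document; each statement's English description precedes it below -/
import Mathlib

section
/- Let k ≥ 3 and G = C(2k+1; {1,3}). Then the independence number of G is at most k−1. -/
open SimpleGraph

def circGraph (n : ℕ) (s : Set (ZMod n)) : SimpleGraph (ZMod n) where
  Adj i j := i ≠ j ∧ (i - j ∈ s ∨ j - i ∈ s)
  symm := ⟨fun i j h => ⟨h.1.symm, h.2.symm⟩⟩
  loopless := ⟨fun i h => h.1 rfl⟩

/-- Number of connected components of `G - S`. -/
noncomputable def numComp {V : Type*} (G : SimpleGraph V) (S : Set V) : ℕ :=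
  Nat.card ((G.induce Sᶜ).ConnectedComponent)

/-- `S` is a vertex cut: removing `S` leaves a disconnected graph. -/
def IsVertexCut {V : Type*} (G : SimpleGraph V) (S : Set V) : Prop :=
  1 < numComp G S

/-- Toughness: minimum of |S| / c(G - S) over vertex cuts `S`. -/
noncomputable def toughness {V : Type*} (G : SimpleGraph V) : ℝ :=
  sInf {x : ℝ | ∃ S : Set V, IsVertexCut G S ∧ x = (S.ncard : ℝ) / (numComp G S : ℝ)}

def MinimallyTough {V : Type*} (G : SimpleGraph V) (t : ℝ) : Prop :=
  toughness G = t ∧ ∀ e ∈ G.edgeSet, toughness (G.deleteEdges {e}) < t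

/-! If `I` contains no two elements at distance 1 then `I` and `I + 1` are disjoint, so
`2|I| ≤ 2k + 1`. If `|I| = k`, then `I ∪ (I + 1)` misses exactly one vertex `u`; then `u + 1 ∈ I`,
and since `x ∈ I` forces `x + 1 ∉ I` and hence `x + 2 ∈ I` unless `x + 2 = u`, the set `I` contains
`u + 1, u + 3, …, u + 2k - 1 = u - 2`. But `u - 2` and `u + 1` are at distance 3. -/

open Set

section AddCommGroup

variable {G : Type*} [AddCommGroup G] {I : Set G} {d u : G}

theorem ncard_union_image_add_right (hd : ∀ a ∈ I, a + d ∉ I) (hI : I.Finite) :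
    (I ∪ (· + d) '' I).ncard = 2 * I.ncard := by
  have hdisj : Disjoint I ((· + d) '' I) := by
    rw [Set.disjoint_left]
    rintro _ ha ⟨b, hb, rfl⟩
    exact hd b hb ha
  rw [ncard_union_eq hdisj hI (hI.image _), ncard_image_of_injective _ (add_left_injective d)]
  ring

theorem two_mul_ncard_le_card [Finite G] (hd : ∀ a ∈ I, a + d ∉ I) :
    2 * I.ncard ≤ Nat.card G :=
  ncard_union_image_add_right hd I.toFinite ▸ ncard_le_card _

theorem exists_notMem_forall_ne_mem_or_sub_mem [Finite G] (hd : ∀ a ∈ I, a + d ∉ I)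
    (hcard : Nat.card G = 2 * I.ncard + 1) :
    ∃ u ∉ I, ∀ v ≠ u, v ∈ I ∨ v - d ∈ I := by
  have hhole : (I ∪ (· + d) '' I)ᶜ.ncard = 1 := by
    have := ncard_add_ncard_compl (I ∪ (· + d) '' I)
    rw [ncard_union_image_add_right hd I.toFinite] at this
    omega
  obtain ⟨u, hu⟩ := ncard_eq_one.1 hhole
  have hu_mem : u ∈ (I ∪ (· + d) '' I)ᶜ := hu ▸ mem_singleton u
  refine ⟨u, fun h => hu_mem (Or.inl h), fun v hv => ?_⟩
  have hv : v ∈ I ∪ (· + d) '' I := by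
    by_contra h
    exact hv (by rwa [← mem_compl_iff, hu] at h)
  rcases hv with h | ⟨b, hb, rfl⟩
  · exact Or.inl h
  · exact Or.inr (by simpa using hb)

theorem add_two_nsmul_mem (hd : ∀ a ∈ I, a + d ∉ I) (hcover : ∀ v ≠ u, v ∈ I ∨ v - d ∈ I)
    {x : G} (hx : x ∈ I) (hxu : x + 2 • d ≠ u) : x + 2 • d ∈ I :=
  (hcover _ hxu).resolve_right fun h =>
    hd x hx (by rwa [two_nsmul, ← add_assoc, add_sub_cancel_right] at h)

theorem add_two_mul_nsmul_mem (hd : ∀ a ∈ I, a + d ∉ I)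
    (hcover : ∀ v ≠ u, v ∈ I ∨ v - d ∈ I) {x : G} (hx : x ∈ I) {m : ℕ}
    (hu : ∀ t < m, x + (2 * (t + 1)) • d ≠ u) : x + (2 * m) • d ∈ I := by
  induction m with
  | zero => simpa using hx
  | succ m ih =>
    have hstep := add_two_nsmul_mem hd hcover (ih fun t ht => hu t (by omega))
      (by simpa only [mul_add, add_nsmul, add_assoc, mul_one] using hu m (by omega))
    simpa only [mul_add, add_nsmul, add_assoc, mul_one] using hstep

end AddCommGroup

theorem ZMod.natCast_ne_zero_of_pos_of_lt {n m : ℕ} (hm : 0 < m) (hmn : m < n) :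
    (m : ZMod n) ≠ 0 := by
  rw [Ne, ZMod.natCast_eq_zero_iff]
  exact Nat.not_dvd_of_pos_of_lt hm hmn

theorem circGraph_adj_add {n : ℕ} {s : Set (ZMod n)} {d : ZMod n} (hd : d ≠ 0) (hds : d ∈ s)
    (a : ZMod n) : (circGraph n s).Adj a (a + d) :=
  ⟨by simpa [eq_comm] using hd, Or.inr (by simpa using hds)⟩

theorem stmt1 (k : ℕ) (hk : 3 ≤ k) (I : Set (ZMod (2*k+1)))
    (hI : ∀ u ∈ I, ∀ v ∈ I, ¬ (circGraph (2*k+1) {1, 3}).Adj u v) :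
    I.ncard ≤ k - 1 := by
  have h10 : (1 : ZMod (2*k+1)) ≠ 0 := by
    exact_mod_cast ZMod.natCast_ne_zero_of_pos_of_lt one_pos (by omega)
  have h30 : (3 : ZMod (2*k+1)) ≠ 0 := by
    exact_mod_cast ZMod.natCast_ne_zero_of_pos_of_lt three_pos (by omega)
  have h1 : ∀ a ∈ I, a + 1 ∉ I := fun a ha hb =>
    hI a ha _ hb (circGraph_adj_add h10 (by simp) a)
  have h3 : ∀ a ∈ I, a + 3 ∉ I := fun a ha hb =>
    hI a ha _ hb (circGraph_adj_add h30 (by simp) a)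
  have hle := two_mul_ncard_le_card h1
  rw [Nat.card_zmod] at hle
  by_contra hlt
  obtain ⟨u, huI, hcover⟩ :=
    exists_notMem_forall_ne_mem_or_sub_mem h1 (by rw [Nat.card_zmod]; omega)
  have hu1 : u + 1 ∈ I := (hcover _ (by simpa using h10)).resolve_right (by simpa using huI)
  have hlast : u + 1 + (2 * (k - 1)) • 1 ∈ I := by
    refine add_two_mul_nsmul_mem h1 hcover hu1 fun t ht h =>
      ZMod.natCast_ne_zero_of_pos_of_lt (n := 2 * k + 1) (m := 2 * t + 3) (by omega) (by omega) ?_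
    rw [nsmul_one] at h
    push_cast at h ⊢
    linear_combination h
  have hk1 : 2 * (k - 1) + 3 = 2 * k + 1 := by omega
  refine h3 _ hlast ?_
  rwa [nsmul_one, add_assoc _ _ (3 : ZMod _), ← Nat.cast_ofNat (n := 3), ← Nat.cast_add, hk1,
    ZMod.natCast_self, add_zero]
end

section
/- Let k ≥ 3 and G = C(2k+1; {1,3}). For every vertex cut S of G (i.e., S ⊆ V(G) with G−S disconnected), |S| / c(G−S) ≥ (k+1)/(k−1), where c denotes the number of connected components. -/
open SimpleGraph

/-!
Let `n = 2k + 1`. Call `b ∈ S` *blocking* if, starting from `b - 1 ∉ S`, a walk in `G - S` that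
only moves forward (by steps `+1`, `+3`, or a two-step detour around an isolated vertex of `S`)
cannot get past `b`. Every vertex outside `S` walks forward to the vertex just before the first
blocking vertex ahead of it, so `c(G - S)` is at most the number of blocking vertices
(and `G - S` is connected if there are none). On the other hand `S` always contains two
non-blocking vertices: either two consecutive vertices of `S` provide them, or `S` has no two
consecutive vertices, and then, since `2` generates `ℤ/n`, `S` has two distinct ends of
`+2`-chains. Hence `c + 2 ≤ |S|`, and together with `c ≤ n - |S|` this gives `c ≤ k - 1` and
`|S| / c ≥ 1 + 2 / c ≥ (k + 1) / (k - 1)`.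
-/

open SimpleGraph

namespace ZMod

variable {n : ℕ} [NeZero n]

theorem eq_univ_of_forall_add_mem {a : ZMod n} (ha : IsUnit a) {T : Set (ZMod n)}
    (hT : ∀ x ∈ T, x + a ∈ T) (hne : T.Nonempty) : T = Set.univ := by
  obtain ⟨x, hx⟩ := hne
  have hmul : ∀ m : ℕ, x + m * a ∈ T := by
    intro m
    induction m with
    | zero => simpa using hx
    | succ m ih => simpa [add_mul, add_assoc] using hT _ ih
  refine Set.eq_univ_of_forall fun y => ?_
  have hy : x + (((y - x) * ↑ha.unit⁻¹).val : ℕ) * a = y := by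
    rw [ZMod.natCast_zmod_val, mul_assoc, ha.val_inv_mul]
    ring
  exact hy ▸ hmul _

theorem exists_mem_add_notMem {a : ZMod n} (ha : IsUnit a) {T : Set (ZMod n)}
    (hne : T.Nonempty) (hT : T ≠ Set.univ) : ∃ x ∈ T, x + a ∉ T := by
  by_contra! h
  exact hT (eq_univ_of_forall_add_mem ha h hne)

theorem exists_pair_sub_two_notMem_or_add_two_notMem (h2 : IsUnit (2 : ZMod n))
    {T : Set (ZMod n)} (hT : T ≠ Set.univ) {x : ZMod n} (hx : x ∈ T) (hx2 : x + 2 ∈ T) :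
    ∃ a b, a ∈ T ∧ b ∈ T ∧ a ≠ b ∧ (a - 2 ∉ T ∨ a + 2 ∉ T) ∧ (b - 2 ∉ T ∨ b + 2 ∉ T) := by
  obtain ⟨e, he, he2⟩ := exists_mem_add_notMem h2.neg ⟨x, hx⟩ hT
  rw [← sub_eq_add_neg] at he2
  have hxe : x + 2 ≠ e := by
    rintro rfl
    simp [hx] at he2
  obtain ⟨g, ⟨hg, hge⟩, hg2⟩ := exists_mem_add_notMem h2 (T := T \ {e}) ⟨x + 2, hx2, hxe⟩
    fun h => (h ▸ Set.mem_univ e : e ∈ T \ {e}).2 rfl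
  have hg2T : g + 2 ∉ T := by
    intro hg2T
    refine hg2 ⟨hg2T, fun hg2e => he2 ?_⟩
    rw [← Set.mem_singleton_iff.1 hg2e, add_sub_cancel_right]
    exact hg
  exact ⟨e, g, he, hg, Ne.symm hge, Or.inl he2, Or.inr hg2T⟩

end ZMod

theorem numComp_le_ncard_compl {V : Type*} [Finite V] (G : SimpleGraph V) (S : Set V) :
    numComp G S ≤ Sᶜ.ncard := by
  rw [← Nat.card_coe_set_eq]
  exact Nat.card_le_card_of_surjective _ fun C => C.exists_rep

theorem circGraph_induce_reachable {n : ℕ} {s S : Set (ZMod n)} {x y : ZMod n}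
    (hx : x ∉ S) (hy : y ∉ S) (hxy : y - x ∈ s) :
    ((circGraph n s).induce Sᶜ).Reachable ⟨x, hx⟩ ⟨y, hy⟩ := by
  by_cases h : x = y
  · subst h
    rfl
  · exact Adj.reachable ⟨h, Or.inr hxy⟩

section CircGraph

variable {n : ℕ} {S : Set (ZMod n)}

/-- `b ∈ S` is blocking when, starting from `b - 1 ∉ S`, neither a step `+1` or `+3` nor, if
`b + 1 ∉ S`, a detour through `b - 2` or `b + 2` leads past `b`. -/
def blocking (S : Set (ZMod n)) : Set (ZMod n) :=
  {b | b ∈ S ∧ b - 1 ∉ S ∧ (b + 1 ∈ S ∧ b + 2 ∈ S ∨ b + 1 ∉ S ∧ b - 2 ∈ S ∧ b + 2 ∈ S)}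

theorem blocking_subset : blocking S ⊆ S := fun _ hb => hb.1

theorem sub_one_notMem_of_mem_blocking {b : ZMod n} (hb : b ∈ blocking S) : b - 1 ∉ S := hb.2.1

theorem add_two_mem_of_mem_blocking {b : ZMod n} (hb : b ∈ blocking S) : b + 2 ∈ S := by
  obtain ⟨-, -, ⟨-, h⟩ | ⟨-, -, h⟩⟩ := hb <;> exact h

theorem add_one_mem_blocking_iff {x : ZMod n} : x + 1 ∈ blocking S ↔
    x + 1 ∈ S ∧ x ∉ S ∧ (x + 2 ∈ S ∧ x + 3 ∈ S ∨ x + 2 ∉ S ∧ x - 1 ∈ S ∧ x + 3 ∈ S) := by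
  simp only [blocking, Set.mem_ofPred_eq]
  ring_nf

theorem exists_reachable_forward_step {x : ZMod n} (hx : x ∉ S) (hx1 : x + 1 ∉ blocking S)
    {d : ℕ} (hd : 0 < d) (hxd : x + d ∉ S) :
    ∃ i, 0 < i ∧ i ≤ d ∧ ∃ hxi : x + i ∉ S,
      ((circGraph n {1, 3}).induce Sᶜ).Reachable ⟨x, hx⟩ ⟨x + i, hxi⟩ := by
  rw [add_one_mem_blocking_iff] at hx1
  have hd_ne {j : ℕ} (hj : x + j ∈ S) : d ≠ j := by rintro rfl; exact hxd hj
  by_cases h1 : x + 1 ∈ S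
  swap
  · exact ⟨1, one_pos, hd, by simpa using h1,
      circGraph_induce_reachable hx _ (by simp)⟩
  have hd1 : d ≠ 1 := hd_ne (by simpa using h1)
  by_cases h2 : x + 2 ∈ S
  · have h3 : x + 3 ∉ S := fun h3 => hx1 ⟨h1, hx, Or.inl ⟨h2, h3⟩⟩
    have hd2 : d ≠ 2 := hd_ne (by simpa using h2)
    exact ⟨3, three_pos, by omega, by simpa using h3,
      circGraph_induce_reachable hx _ (by simp)⟩
  · have hdetour : x - 1 ∉ S ∨ x + 3 ∉ S := by
      by_contra! h
      exact hx1 ⟨h1, hx, Or.inr ⟨h2, h⟩⟩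
    refine ⟨2, two_pos, by omega, by simpa using h2, ?_⟩
    rcases hdetour with hm | h3
    · exact (circGraph_induce_reachable hm hx (by simp)).symm.trans
        (circGraph_induce_reachable hm _ (by ring_nf; simp))
    · exact (circGraph_induce_reachable hx h3 (by simp)).trans
        (circGraph_induce_reachable (by simpa using h2) h3 (by ring_nf; simp)).symm

theorem reachable_of_forall_notMem_blocking {x y : ZMod n} (hx : x ∉ S) (hy : y ∉ S) (d : ℕ)
    (hxy : x + d = y) (hB : ∀ j : ℕ, 0 < j → j ≤ d → x + j ∉ blocking S) :
    ((circGraph n {1, 3}).induce Sᶜ).Reachable ⟨x, hx⟩ ⟨y, hy⟩ := by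
  induction d using Nat.strong_induction_on generalizing x with
  | _ d ih =>
  rcases Nat.eq_zero_or_pos d with rfl | hd
  · obtain rfl : x = y := by simpa using hxy
    rfl
  obtain ⟨i, hi, hid, hxi, hr⟩ :=
    exists_reachable_forward_step hx (by simpa using hB 1 one_pos hd) hd (hxy ▸ hy)
  refine hr.trans (ih (d - i) (by omega) hxi ?_ fun j hj hjd => ?_)
  · rw [← hxy, Nat.cast_sub hid]
    ring
  · have := hB (i + j) (by omega) (by omega)
    rwa [Nat.cast_add, ← add_assoc] at this

theorem exists_pair_notMem_blocking_of_add_one_mem [Nontrivial (ZMod n)] {x : ZMod n}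
    (hx : x ∈ S) (hx1 : x + 1 ∈ S) :
    ∃ a b, a ∈ S \ blocking S ∧ b ∈ S \ blocking S ∧ a ≠ b := by
  have hx1B : x + 1 ∉ blocking S := fun h => sub_one_notMem_of_mem_blocking h (by simpa using hx)
  by_cases hx2 : x + 2 ∈ S
  · refine ⟨x + 1, x + 2, ⟨hx1, hx1B⟩, ⟨hx2, fun h => sub_one_notMem_of_mem_blocking h ?_⟩, ?_⟩
    · convert hx1 using 1
      ring
    · intro h
      exact one_ne_zero (by linear_combination -h : (1 : ZMod n) = 0)
  · exact ⟨x, x + 1, ⟨hx, fun h => hx2 (add_two_mem_of_mem_blocking h)⟩, ⟨hx1, hx1B⟩, by simp⟩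

variable [NeZero n]

theorem exists_mem_blocking_reachable (hB : (blocking S).Nonempty) {x : ZMod n} (hx : x ∉ S) :
    ∃ b, ∃ hb : b ∈ blocking S, ((circGraph n {1, 3}).induce Sᶜ).Reachable ⟨x, hx⟩
      ⟨b - 1, sub_one_notMem_of_mem_blocking hb⟩ := by
  classical
  have hex : ∃ d : ℕ, x + (d + 1 : ℕ) ∈ blocking S := by
    obtain ⟨b, hb⟩ := hB
    have hxb : x + (((b - x - 1).val + 1 : ℕ) : ZMod n) = b := by
      push_cast [ZMod.natCast_zmod_val]
      ring
    exact ⟨_, hxb ▸ hb⟩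
  refine ⟨_, Nat.find_spec hex,
    reachable_of_forall_notMem_blocking hx _ (Nat.find hex) (by push_cast; ring) fun j hj hjd => ?_⟩
  have := Nat.find_min hex (show j - 1 < Nat.find hex by omega)
  rwa [Nat.sub_add_cancel hj] at this

theorem preconnected_of_blocking_eq_empty (hB : blocking S = ∅) :
    ((circGraph n {1, 3}).induce Sᶜ).Preconnected := by
  rintro ⟨x, hx⟩ ⟨y, hy⟩
  exact reachable_of_forall_notMem_blocking hx hy (y - x).val
    (by rw [ZMod.natCast_zmod_val]; ring) fun j _ _ => hB ▸ Set.notMem_empty _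

theorem blocking_nonempty_of_isVertexCut (hS : IsVertexCut (circGraph n {1, 3}) S) :
    (blocking S).Nonempty := by
  refine Set.nonempty_iff_ne_empty.2 fun hB => hS.not_ge ?_
  have := (preconnected_of_blocking_eq_empty hB).subsingleton_connectedComponent
  exact Finite.card_le_one_iff_subsingleton.2 this

theorem numComp_le_ncard_blocking (hB : (blocking S).Nonempty) :
    numComp (circGraph n {1, 3}) S ≤ (blocking S).ncard := by
  rw [← Nat.card_coe_set_eq]
  refine Nat.card_le_card_of_surjective (fun b : blocking S =>
    ((circGraph n {1, 3}).induce Sᶜ).connectedComponentMk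
      ⟨b - 1, sub_one_notMem_of_mem_blocking b.2⟩) ?_
  refine ConnectedComponent.ind fun ⟨x, hx⟩ => ?_
  obtain ⟨b, hb, hr⟩ := exists_mem_blocking_reachable hB hx
  exact ⟨⟨b, hb⟩, ConnectedComponent.sound hr.symm⟩

theorem exists_pair_notMem_blocking_of_forall_add_one_notMem (h2 : IsUnit (2 : ZMod n))
    (hS : S ≠ Set.univ) (hB : (blocking S).Nonempty) (hS1 : ∀ x ∈ S, x + 1 ∉ S) :
    ∃ a b, a ∈ S \ blocking S ∧ b ∈ S \ blocking S ∧ a ≠ b := by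
  obtain ⟨g, hg⟩ := hB
  obtain ⟨a, b, ha, hb, hab, ha2, hb2⟩ :=
    ZMod.exists_pair_sub_two_notMem_or_add_two_notMem h2 hS hg.1 (add_two_mem_of_mem_blocking hg)
  have hnotB (c : ZMod n) (hc : c - 2 ∉ S ∨ c + 2 ∉ S) : c ∉ blocking S := by
    rintro ⟨hcS, -, ⟨hc1, -⟩ | ⟨-, hm, hp⟩⟩
    · exact hS1 c hcS hc1
    · exact hc.elim (· hm) (· hp)
  exact ⟨a, b, ⟨ha, hnotB a ha2⟩, ⟨hb, hnotB b hb2⟩, hab⟩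

theorem ncard_blocking_add_two_le (h2 : IsUnit (2 : ZMod n)) (hS : S ≠ Set.univ)
    (hB : (blocking S).Nonempty) : (blocking S).ncard + 2 ≤ S.ncard := by
  obtain ⟨g, hg⟩ := hB
  obtain ⟨t, ht⟩ := (Set.ne_univ_iff_exists_notMem S).1 hS
  have : Nontrivial (ZMod n) := nontrivial_of_ne g t fun h => ht (h ▸ hg.1)
  obtain ⟨a, b, ha, hb, hab⟩ : ∃ a b, a ∈ S \ blocking S ∧ b ∈ S \ blocking S ∧ a ≠ b := by
    by_cases hS1 : ∀ x ∈ S, x + 1 ∉ S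
    · exact exists_pair_notMem_blocking_of_forall_add_one_notMem h2 hS ⟨g, hg⟩ hS1
    · obtain ⟨x, hx, hx1⟩ : ∃ x ∈ S, x + 1 ∈ S := by simpa using hS1
      exact exists_pair_notMem_blocking_of_add_one_mem hx hx1
  have h2le : 1 < (S \ blocking S).ncard :=
    (Set.one_lt_ncard_iff (Set.toFinite _)).2 ⟨a, b, ha, hb, hab⟩
  have := Set.ncard_sdiff_add_ncard_of_subset (blocking_subset (S := S))
  omega

end CircGraph

theorem add_one_div_sub_one_le_div {k c s : ℕ} (hc : 1 < c) (hcs : c + 2 ≤ s)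
    (hsum : c + s ≤ 2 * k + 1) : ((k : ℝ) + 1) / ((k : ℝ) - 1) ≤ (s : ℝ) / (c : ℝ) := by
  have hcR : (1 : ℝ) < c := by exact_mod_cast hc
  have hckR : (c : ℝ) + 1 ≤ k := by exact_mod_cast (by omega : c + 1 ≤ k)
  have hcsR : (c : ℝ) + 2 ≤ s := by exact_mod_cast hcs
  rw [div_le_div_iff₀ (by linarith) (by linarith)]
  nlinarith

theorem stmt2_general (k : ℕ) (S : Set (ZMod (2*k+1)))
    (hS : IsVertexCut (circGraph (2*k+1) {1, 3}) S) :
    ((k : ℝ) + 1) / ((k : ℝ) - 1) ≤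
      (S.ncard : ℝ) / (numComp (circGraph (2*k+1) {1, 3}) S : ℝ) := by
  have h2 : IsUnit (2 : ZMod (2*k+1)) := by
    simpa using (ZMod.isUnit_iff_coprime 2 (2*k+1)).2
      (Nat.coprime_two_left.2 (odd_two_mul_add_one k))
  have hc : 1 < numComp (circGraph (2*k+1) {1, 3}) S := hS
  have hB := blocking_nonempty_of_isVertexCut hS
  have hcompl := numComp_le_ncard_compl (circGraph (2*k+1) {1, 3}) S
  have hSne : S ≠ Set.univ := by
    rintro rfl
    simp only [Set.compl_univ, Set.ncard_empty] at hcompl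
    omega
  have hsum : S.ncard + Sᶜ.ncard = 2*k+1 := by rw [Set.ncard_add_ncard_compl, Nat.card_zmod]
  have hcS := (numComp_le_ncard_blocking hB).trans
    (Nat.le_sub_of_add_le (ncard_blocking_add_two_le h2 hSne hB))
  exact add_one_div_sub_one_le_div hc (by omega) (by omega)

theorem stmt2 (k : ℕ) (hk : 3 ≤ k) (S : Set (ZMod (2*k+1)))
    (hS : IsVertexCut (circGraph (2*k+1) {1, 3}) S) :
    ((k : ℝ) + 1) / ((k : ℝ) - 1) ≤
      (S.ncard : ℝ) / (numComp (circGraph (2*k+1) {1, 3}) S : ℝ) :=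
  stmt2_general k S hS
end

section
/- Let k ≥ 3 and G = C(2k+1; {1,3}). The set X = {v_{2i+1} : 0 ≤ i ≤ k} (i.e., the k+1 odd-indexed vertices 1,3,…,2k+1) is a vertex cut of G with |X| = k+1 and c(G−X) = k−1. -/
/-!
Removing `X` leaves the even residues `2, 4, …, 2k`. Two of them differ by an even number of
absolute value at most `2k - 2`, which is `≡ ±1, ±3 (mod 2k+1)` only for the pair `{2, 2k}`,
since `2 - 2k ≡ 3`. Hence `G - X` is the edge `{2, 2k}` together with the `k - 2` isolated
vertices `4, …, 2k - 2`, so it has `k - 1 ≥ 2` components.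
-/

open SimpleGraph

theorem ZMod.sub_eq_natCast_iff {n : ℕ} [NeZero n] (x y : ZMod n) {c : ℕ} (hc : c < n) :
    x - y = c ↔ x.val = c + y.val ∨ x.val + n = c + y.val := by
  have hx := x.val_lt
  have hy := y.val_lt
  rw [sub_eq_iff_eq_add, ← (ZMod.val_injective n).eq_iff, ZMod.val_add, ZMod.val_natCast_of_lt hc]
  rcases lt_or_ge (c + y.val) n with h | h
  · rw [Nat.mod_eq_of_lt h]; omega
  · rw [Nat.mod_eq_sub_mod h, Nat.mod_eq_of_lt (by omega)]; omega

namespace SimpleGraph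

variable {V W : Type*} {G : SimpleGraph V}

theorem Reachable.eq_of_adj_imp_eq (f : V → W) (hadj : ∀ ⦃u v⦄, G.Adj u v → f u = f v)
    {u v : V} (h : G.Reachable u v) : f u = f v := by
  obtain ⟨p⟩ := h
  induction p with
  | nil => rfl
  | cons h _ ih => exact (hadj h).trans ih

theorem card_connectedComponent_eq_of_fibers (f : V → W) (hf : Function.Surjective f)
    (hadj : ∀ ⦃u v⦄, G.Adj u v → f u = f v) (hfib : ∀ ⦃u v⦄, f u = f v → G.Reachable u v) :
    Nat.card G.ConnectedComponent = Nat.card W := by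
  refine Nat.card_eq_of_bijective
    (ConnectedComponent.lift f fun _ _ p _ => (Reachable.eq_of_adj_imp_eq f hadj ⟨p⟩)) ⟨?_, ?_⟩
  · rintro ⟨u⟩ ⟨v⟩ h
    exact ConnectedComponent.sound (hfib h)
  · intro w
    obtain ⟨v, rfl⟩ := hf w
    exact ⟨G.connectedComponentMk v, rfl⟩

end SimpleGraph

section OddCut

variable {k : ℕ}

-- `v_{2k+1}` is the residue `0`, so `oddCut k` is `{1, 3, …, 2k - 1} ∪ {0}`.
def oddCut (k : ℕ) : Set (ZMod (2*k+1)) :=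
  {v | ∃ i : ℕ, i ≤ k ∧ v = ((2*i+1 : ℕ) : ZMod (2*k+1))}

theorem mem_oddCut_iff (v : ZMod (2*k+1)) : v ∈ oddCut k ↔ v.val % 2 = 1 ∨ v.val = 0 := by
  constructor
  · rintro ⟨i, hi, rfl⟩
    rw [ZMod.val_natCast]
    rcases hi.lt_or_eq with hi | rfl
    · rw [Nat.mod_eq_of_lt (show 2*i+1 < 2*k+1 by omega)]; omega
    · simp
  · intro h
    have hv := v.val_lt
    refine ⟨if v.val = 0 then k else v.val / 2, by split <;> omega, ?_⟩
    conv_lhs => rw [← ZMod.natCast_zmod_val v]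
    split_ifs with h0
    · rw [h0, Nat.cast_zero, ZMod.natCast_self]
    · congr 1; omega

theorem ncard_oddCut : (oddCut k).ncard = k + 1 := by
  have hinj : Set.InjOn (fun i : ℕ => ((2*i+1 : ℕ) : ZMod (2*k+1))) ↑(Finset.range (k+1)) := by
    intro i hi j hj hij
    simp only [Finset.coe_range, Set.mem_Iio] at hi hj
    have := ((ZMod.natCast_eq_natCast_iff _ _ _).mp hij).eq_of_abs_lt
      (abs_lt.mpr ⟨by push_cast; omega, by push_cast; omega⟩)
    omega
  have hX : oddCut k =
      ↑((Finset.range (k+1)).image fun i : ℕ => ((2*i+1 : ℕ) : ZMod (2*k+1))) := by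
    ext v
    simp [oddCut, eq_comm]
  rw [hX, Set.ncard_coe_finset, Finset.card_image_of_injOn hinj, Finset.card_range]

theorem notMem_oddCut_iff (v : ZMod (2*k+1)) : v ∉ oddCut k ↔ v.val % 2 = 0 ∧ v.val ≠ 0 := by
  rw [mem_oddCut_iff]
  omega

theorem circGraph_adj_iff_of_notMem_oddCut (hk : 2 ≤ k) {u v : ZMod (2*k+1)}
    (hu : u ∉ oddCut k) (hv : v ∉ oddCut k) :
    (circGraph (2*k+1) {1, 3}).Adj u v ↔
      (u.val = 2 ∧ v.val = 2*k) ∨ (u.val = 2*k ∧ v.val = 2) := by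
  rw [notMem_oddCut_iff] at hu hv
  have hu' := u.val_lt
  have hv' := v.val_lt
  have h1 : (1 : ZMod (2*k+1)) = ((1 : ℕ) : ZMod (2*k+1)) := Nat.cast_one.symm
  have h3 : (3 : ZMod (2*k+1)) = ((3 : ℕ) : ZMod (2*k+1)) := (Nat.cast_ofNat).symm
  simp only [circGraph, Set.mem_insert_iff, Set.mem_singleton_iff, h1, h3,
    ZMod.sub_eq_natCast_iff _ _ (show 1 < 2*k+1 by omega),
    ZMod.sub_eq_natCast_iff _ _ (show 3 < 2*k+1 by omega), ← (ZMod.val_injective _).ne_iff]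
  omega

theorem numComp_oddCut (hk : 2 ≤ k) : numComp (circGraph (2*k+1) {1, 3}) (oddCut k) = k - 1 := by
  have hval (u : ↥(oddCut k)ᶜ) :=
    And.intro ((notMem_oddCut_iff _).mp u.2) (u : ZMod (2*k+1)).val_lt
  -- label `2k` and `2` by `0`, and `2j + 2` by `j` for `1 ≤ j ≤ k - 2`
  let label (u : ↥(oddCut k)ᶜ) : Fin (k - 1) :=
    ⟨if (u : ZMod (2*k+1)).val = 2*k then 0 else (u : ZMod (2*k+1)).val / 2 - 1, by
      have := hval u; split <;> omega⟩
  have hadj {u v : ↥(oddCut k)ᶜ} :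
      ((circGraph (2*k+1) {1, 3}).induce (oddCut k)ᶜ).Adj u v ↔
        ((u : ZMod (2*k+1)).val = 2 ∧ (v : ZMod (2*k+1)).val = 2*k) ∨
          ((u : ZMod (2*k+1)).val = 2*k ∧ (v : ZMod (2*k+1)).val = 2) :=
    induce_adj.trans (circGraph_adj_iff_of_notMem_oddCut hk u.2 v.2)
  refine (card_connectedComponent_eq_of_fibers label ?_ ?_ ?_).trans (Nat.card_fin _)
  · intro j
    have hj := j.2
    have hlt : 2 * (j + 1) < 2*k+1 := by omega
    have hmem : ((2 * (j + 1) : ℕ) : ZMod (2*k+1)) ∈ (oddCut k)ᶜ := by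
      rw [Set.mem_compl_iff, notMem_oddCut_iff, ZMod.val_natCast_of_lt hlt]; omega
    refine ⟨⟨_, hmem⟩, Fin.ext ?_⟩
    simp only [label, ZMod.val_natCast_of_lt hlt]
    split <;> omega
  · intro u v huv
    have := hval u; have := hval v
    simp only [label, hadj, Fin.ext_iff] at huv ⊢
    split_ifs <;> omega
  · intro u v huv
    have := hval u; have := hval v
    simp only [label, Fin.ext_iff] at huv
    by_cases huv' : (u : ZMod (2*k+1)).val = (v : ZMod (2*k+1)).val
    · rw [Subtype.ext (ZMod.val_injective _ huv')]
    · exact Adj.reachable (hadj.mpr (by split_ifs at huv <;> omega))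

end OddCut

theorem stmt3 (k : ℕ) (hk : 3 ≤ k) :
    let G := circGraph (2*k+1) {1, 3}
    let X : Set (ZMod (2*k+1)) := {v | ∃ i : ℕ, i ≤ k ∧ v = ((2*i+1 : ℕ) : ZMod (2*k+1))}
    IsVertexCut G X ∧ X.ncard = k + 1 ∧ numComp G X = k - 1 := by
  intro G X
  have hcomp : numComp G X = k - 1 := numComp_oddCut (by omega)
  exact ⟨show 1 < numComp G X by omega, ncard_oddCut, hcomp⟩
end

section
/- Let k ≥ 3 and G = C(2k+1; {1,3}), and let e = v_1 v_4 (a chord edge). Then U = {v_2} ∪ {v_{2i+1} : 2 ≤ i ≤ k} is a vertex cut of G−e with |U| = k and c((G−e)−U) = k−1; consequently τ(G−e) ≤ k/(k−1). -/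
open SimpleGraph

/-!
The paper's vertex `v_i` is the residue `i`, so `v_{2k+1} = 0` and `U = {0, 2} ∪ {odd i ≥ 5}`.
A step of `±1` or `±3` that does not wrap around changes parity, so among the survivors
`1, 3, 4, 6, …, 2k` only `1–4`, `3–4` and `3–6` are adjacent, and every wrap-around edge
ends in `0`, `2` or `2k - 1`, which lie in `U`. Deleting the chord `1–4` therefore leaves the
components `{1}`, `{3, 4, 6}` and the `k - 3` singletons `{8}, …, {2k}`: `k - 1` in all, against
`|U| = k`.
-/

namespace ZMod

variable {n : ℕ} [NeZero n]

lemma val_add_eq_or (a b : ZMod n) :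
    (a + b).val = a.val + b.val ∨ (a + b).val + n = a.val + b.val := by
  rcases lt_or_ge (a.val + b.val) n with h | h
  · exact .inl (val_add_of_lt h)
  · exact .inr (val_add_val_of_le h).symm

lemma eq_natCast_iff_val_eq {u : ZMod n} {a : ℕ} (ha : a < n) : u = a ↔ u.val = a :=
  ⟨fun h => h ▸ val_natCast_of_lt ha, fun h => h ▸ (natCast_zmod_val u).symm⟩

lemma sub_eq_natCast_iff_s6 {u v : ZMod n} {d : ℕ} (hd : d < n) :
    u - v = d ↔ u.val = v.val + d ∨ u.val + n = v.val + d := by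
  rw [sub_eq_iff_eq_add']
  constructor
  · rintro rfl
    have := val_add_eq_or v (d : ZMod n)
    rw [val_natCast_of_lt hd] at this
    omega
  · rintro (h | h) <;>
      simpa [natCast_zmod_val, add_comm] using congrArg (Nat.cast : ℕ → ZMod n) h

omit [NeZero n] in
lemma val_natCast_eq_or {a : ℕ} (ha : a < 2 * n) :
    (a : ZMod n).val = a ∨ (a : ZMod n).val + n = a := by
  rw [val_natCast]
  rcases lt_or_ge a n with h | h
  · exact .inl (Nat.mod_eq_of_lt h)
  · right
    rw [Nat.mod_eq_sub_mod h, Nat.mod_eq_of_lt (by omega)]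
    omega

end ZMod

namespace SimpleGraph

variable {V α : Type*} {G : SimpleGraph V}

lemma Reachable.eq_of_forall_adj {f : V → α} (hf : ∀ ⦃u v⦄, G.Adj u v → f u = f v)
    {u v : V} (h : G.Reachable u v) : f u = f v := by
  obtain ⟨p⟩ := h
  induction p with
  | nil => rfl
  | cons hadj _ ih => exact (hf hadj).trans ih

lemma card_connectedComponent_eq_of_section (f : V → α) (r : α → V)
    (hf : ∀ ⦃u v⦄, G.Adj u v → f u = f v) (hfr : ∀ a, f (r a) = a)
    (hreach : ∀ v, G.Reachable (r (f v)) v) :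
    Nat.card G.ConnectedComponent = Nat.card α :=
  Nat.card_congr
    { toFun := ConnectedComponent.lift f fun _ _ p _ => p.reachable.eq_of_forall_adj hf
      invFun := fun a => G.connectedComponentMk (r a)
      left_inv := fun c => c.ind fun v => ConnectedComponent.sound (hreach v)
      right_inv := hfr }

end SimpleGraph

lemma toughness_le_of_isVertexCut {V : Type*} {G : SimpleGraph V} {S : Set V}
    (hS : IsVertexCut G S) : toughness G ≤ S.ncard / numComp G S :=
  csInf_le ⟨0, by rintro x ⟨T, -, rfl⟩; positivity⟩ ⟨S, hS, rfl⟩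

lemma circGraph_one_three_adj_iff {n : ℕ} [NeZero n] (hn : 3 < n) {u v : ZMod n} :
    (circGraph n {1, 3}).Adj u v ↔ ∃ d, (d = 1 ∨ d = 3) ∧
      (u.val = v.val + d ∨ u.val + n = v.val + d ∨
        v.val = u.val + d ∨ v.val + n = u.val + d) := by
  have hmem : ∀ x : ZMod n, x ∈ ({1, 3} : Set (ZMod n)) ↔
      ∃ d, (d = 1 ∨ d = 3) ∧ x = (d : ℕ) := by
    intro x
    simp only [Set.mem_insert_iff, Set.mem_singleton_iff]
    constructor
    · rintro (rfl | rfl)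
      exacts [⟨1, .inl rfl, Nat.cast_one.symm⟩, ⟨3, .inr rfl, Nat.cast_ofNat.symm⟩]
    · rintro ⟨d, rfl | rfl, rfl⟩
      exacts [.inl Nat.cast_one, .inr Nat.cast_ofNat]
  constructor
  · rintro ⟨-, h | h⟩ <;> obtain ⟨d, hd, h⟩ := (hmem _).1 h <;>
      rw [ZMod.sub_eq_natCast_iff_s6 (by omega)] at h <;> exact ⟨d, hd, by omega⟩
  · rintro ⟨d, hd, h⟩
    refine ⟨fun huv => by subst huv; omega, ?_⟩
    have hsub : u - v = d ∨ v - u = d := by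
      rw [ZMod.sub_eq_natCast_iff_s6 (by omega), ZMod.sub_eq_natCast_iff_s6 (by omega)]
      omega
    exact hsub.imp (fun h => (hmem _).2 ⟨d, hd, h⟩) (fun h => (hmem _).2 ⟨d, hd, h⟩)

def circDeleteChord (k : ℕ) : SimpleGraph (ZMod (2*k+1)) :=
  (circGraph (2*k+1) {1, 3}).deleteEdges {s(((1 : ℕ) : ZMod (2*k+1)), ((4 : ℕ) : ZMod (2*k+1)))}

def cutSet (k : ℕ) : Set (ZMod (2*k+1)) :=
  {v | v = ((2 : ℕ) : ZMod (2*k+1)) ∨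
    ∃ i : ℕ, 2 ≤ i ∧ i ≤ k ∧ v = ((2*i+1 : ℕ) : ZMod (2*k+1))}

section
variable {k : ℕ}

lemma circDeleteChord_adj_iff (hk : 3 ≤ k) {u v : ZMod (2*k+1)} :
    (circDeleteChord k).Adj u v ↔ (∃ d, (d = 1 ∨ d = 3) ∧
      (u.val = v.val + d ∨ u.val + (2*k+1) = v.val + d ∨
        v.val = u.val + d ∨ v.val + (2*k+1) = u.val + d)) ∧
      ¬ (u.val = 1 ∧ v.val = 4 ∨ u.val = 4 ∧ v.val = 1) := by
  rw [circDeleteChord, deleteEdges_adj, circGraph_one_three_adj_iff (by omega),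
    Set.mem_singleton_iff, Sym2.eq_iff, ZMod.eq_natCast_iff_val_eq (by omega),
    ZMod.eq_natCast_iff_val_eq (by omega), ZMod.eq_natCast_iff_val_eq (by omega),
    ZMod.eq_natCast_iff_val_eq (by omega)]

lemma mem_cutSet_iff (hk : 3 ≤ k) {v : ZMod (2*k+1)} :
    v ∈ cutSet k ↔ v.val = 0 ∨ v.val = 2 ∨ (v.val % 2 = 1 ∧ 5 ≤ v.val) := by
  have hv := v.val_lt
  constructor
  · rintro (rfl | ⟨i, hi2, hik, rfl⟩)
    · rw [ZMod.val_natCast_of_lt (by omega)]; omega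
    · have := ZMod.val_natCast_eq_or (n := 2*k+1) (a := 2*i+1) (by omega)
      omega
  · rintro (h | h | ⟨hodd, h5⟩)
    · refine .inr ⟨k, by omega, le_rfl, ?_⟩
      rw [ZMod.natCast_self, ← ZMod.val_eq_zero, h]
    · exact .inl ((ZMod.eq_natCast_iff_val_eq (by omega)).2 h)
    · refine .inr ⟨(v.val - 1) / 2, by omega, by omega, ?_⟩
      rw [ZMod.eq_natCast_iff_val_eq (by omega)]
      omega

-- Numbers the components `{1}`, `{3, 4, 6}`, `{8}`, …, `{2k}` as `0, 1, 2, …, k - 2`.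
def componentIndex (a : ℕ) : ℕ := if a = 1 then 0 else if a ≤ 6 then 1 else a / 2 - 2

def componentRep (j : ℕ) : ℕ := if j = 0 then 1 else if j = 1 then 3 else 2 * j + 4

lemma componentIndex_componentRep (j : ℕ) : componentIndex (componentRep j) = j := by
  unfold componentIndex componentRep
  split_ifs <;> omega

lemma componentIndex_eq_of_adj (hk : 3 ≤ k) {u v : ZMod (2*k+1)} (hu : u ∉ cutSet k)
    (hv : v ∉ cutSet k) (h : (circDeleteChord k).Adj u v) :
    componentIndex u.val = componentIndex v.val := by
  rw [mem_cutSet_iff hk] at hu hv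
  obtain ⟨⟨d, hd, hstep⟩, hchord⟩ := (circDeleteChord_adj_iff hk).1 h
  have := u.val_lt
  have := v.val_lt
  unfold componentIndex
  split_ifs <;> omega

lemma componentIndex_lt (hk : 3 ≤ k) (v : ZMod (2*k+1)) : componentIndex v.val < k - 1 := by
  have := v.val_lt
  unfold componentIndex
  split_ifs <;> omega

lemma val_componentRep {j : ℕ} (hj : j < k - 1) :
    ((componentRep j : ℕ) : ZMod (2*k+1)).val = componentRep j := by
  apply ZMod.val_natCast_of_lt
  unfold componentRep
  split_ifs <;> omega

lemma componentRep_notMem_cutSet (hk : 3 ≤ k) {j : ℕ} (hj : j < k - 1) :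
    ((componentRep j : ℕ) : ZMod (2*k+1)) ∉ cutSet k := by
  rw [mem_cutSet_iff hk, val_componentRep hj]
  unfold componentRep
  grind

lemma reachable_componentRep (hk : 3 ≤ k) (v : ↥(cutSet k)ᶜ) :
    ((circDeleteChord k).induce (cutSet k)ᶜ).Reachable
      ⟨componentRep (componentIndex v.1.val),
        componentRep_notMem_cutSet hk (componentIndex_lt hk v.1)⟩ v := by
  have hv := v.2
  rw [Set.mem_compl_iff, mem_cutSet_iff hk] at hv
  have := v.1.val_lt
  by_cases h46 : v.1.val = 4 ∨ v.1.val = 6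
  · have hrep : componentRep (componentIndex v.1.val) = 3 := by
      unfold componentIndex componentRep
      grind
    apply Adj.reachable
    rw [induce_adj, circDeleteChord_adj_iff hk, val_componentRep (componentIndex_lt hk v.1),
      hrep]
    exact ⟨⟨v.1.val - 3, by omega, by omega⟩, by omega⟩
  · have hrep : componentRep (componentIndex v.1.val) = v.1.val := by
      unfold componentIndex componentRep
      grind
    convert Reachable.refl v
    rw [hrep, ZMod.natCast_zmod_val]

lemma numComp_circDeleteChord_cutSet (hk : 3 ≤ k) :
    numComp (circDeleteChord k) (cutSet k) = k - 1 := by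
  refine (card_connectedComponent_eq_of_section (α := Fin (k - 1))
    (fun v => ⟨componentIndex v.1.val, componentIndex_lt hk v.1⟩)
    (fun j => ⟨componentRep j, componentRep_notMem_cutSet hk j.2⟩) ?_ ?_ ?_).trans
    (Nat.card_fin _)
  · exact fun u v h => Fin.ext (componentIndex_eq_of_adj hk u.2 v.2 h)
  · exact fun j => Fin.ext (by simp only [val_componentRep j.2, componentIndex_componentRep])
  · exact reachable_componentRep hk

lemma ncard_cutSet (hk : 3 ≤ k) : (cutSet k).ncard = k := by
  set g : ℕ → ZMod (2*k+1) := fun i => ((2*i+1 : ℕ) : ZMod (2*k+1))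
  have hval : ∀ i ∈ Set.Icc 2 k, (g i).val = 2*i+1 ∨ (g i).val + (2*k+1) = 2*i+1 :=
    fun i hi => ZMod.val_natCast_eq_or (by grind)
  have hU : cutSet k = insert ((2 : ℕ) : ZMod (2*k+1)) (g '' Set.Icc 2 k) := by
    ext v
    simp only [cutSet, Set.mem_ofPred_eq, Set.mem_insert_iff, Set.mem_image, Set.mem_Icc, g]
    grind
  have hinj : Set.InjOn g (Set.Icc 2 k) := fun i hi j hj h => by
    have := hval i hi
    have := hval j hj
    have := congrArg ZMod.val h
    grind
  have h2 : ((2 : ℕ) : ZMod (2*k+1)) ∉ g '' Set.Icc 2 k := by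
    rintro ⟨i, hi, h⟩
    have := hval i hi
    rw [h, ZMod.val_natCast_of_lt (by omega)] at this
    grind
  rw [hU, Set.ncard_insert_of_notMem h2 ((Set.finite_Icc 2 k).image g), hinj.ncard_image,
    ← Finset.coe_Icc, Set.ncard_coe_finset, Nat.card_Icc]
  omega

end

theorem stmt6 (k : ℕ) (hk : 3 ≤ k) :
    let G := circGraph (2*k+1) {1, 3}
    let G' := G.deleteEdges {s(((1 : ℕ) : ZMod (2*k+1)), ((4 : ℕ) : ZMod (2*k+1)))}
    let U : Set (ZMod (2*k+1)) :=
      {v | v = ((2 : ℕ) : ZMod (2*k+1)) ∨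
        ∃ i : ℕ, 2 ≤ i ∧ i ≤ k ∧ v = ((2*i+1 : ℕ) : ZMod (2*k+1))}
    IsVertexCut G' U ∧ U.ncard = k ∧ numComp G' U = k - 1 ∧
      toughness G' ≤ (k : ℝ) / ((k : ℝ) - 1) := by
  intro G G' U
  have hcomp : numComp G' U = k - 1 := numComp_circDeleteChord_cutSet hk
  have hcard : U.ncard = k := ncard_cutSet hk
  have hcut : IsVertexCut G' U := by
    rw [IsVertexCut, hcomp]
    omega
  refine ⟨hcut, hcard, hcomp, ?_⟩
  calc toughness G' ≤ U.ncard / numComp G' U := toughness_le_of_isVertexCut hcut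
    _ = k / (k - 1 : ℝ) := by rw [hcard, hcomp, Nat.cast_sub (by omega), Nat.cast_one]
end

section
/- Let k ≥ 3 and G = C(3k+1; {1,2,4}). Then the independence number of G is at most k−1. -/
/-! If no two elements of `I` differ by `1` or `2`, the blocks `{v, v + 1, v + 2}`, `v ∈ I`, are
pairwise disjoint, so `3 |I| ≤ 3k + 1`. If `|I| = k`, the blocks miss exactly one vertex `u`. Then
`u, u - 1, u - 2 ∉ I`, so `u + 1` can only be covered by its own block and `u - 1` only by the block
of `u - 3`; but `u + 1` and `u - 3` differ by `4`. -/

open SimpleGraph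

open Finset Pointwise

lemma mem_vadd_finset_iff_sub_mem {G : Type*} [AddCommGroup G] [DecidableEq G] {s : Finset G}
    {a x : G} : x ∈ a +ᵥ s ↔ x - a ∈ s := by
  rw [← neg_vadd_mem_iff, vadd_eq_add, neg_add_eq_sub]

section Blocks

variable {R : Type*} [CommRing R] [DecidableEq R] {s : Finset R}

def blocks (s : Finset R) : Finset R := s ∪ ((1 : R) +ᵥ s) ∪ ((2 : R) +ᵥ s)

lemma mem_blocks {x : R} : x ∈ blocks s ↔ x ∈ s ∨ x - 1 ∈ s ∨ x - 2 ∈ s := by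
  simp only [blocks, mem_union, mem_vadd_finset_iff_sub_mem, or_assoc]

lemma card_blocks (hs : ∀ v ∈ s, v + 1 ∉ s ∧ v + 2 ∉ s) : #(blocks s) = 3 * #s := by
  have h01 : Disjoint s ((1 : R) +ᵥ s) := disjoint_right.2 fun x hx hxs =>
    (hs _ (mem_vadd_finset_iff_sub_mem.1 hx)).1 (by rwa [sub_add_cancel])
  have h012 : Disjoint (s ∪ ((1 : R) +ᵥ s)) ((2 : R) +ᵥ s) := by
    refine disjoint_union_left.2 ⟨disjoint_right.2 fun x hx hxs => ?_,
      disjoint_right.2 fun x hx hxs => ?_⟩ <;> rw [mem_vadd_finset_iff_sub_mem] at hx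
    · exact (hs _ hx).2 (by rwa [sub_add_cancel])
    · exact (hs _ hx).1 (by rwa [show x - 2 + 1 = x - 1 by ring, ← mem_vadd_finset_iff_sub_mem])
  rw [blocks, card_union_of_disjoint h012, card_union_of_disjoint h01, card_vadd_finset,
    card_vadd_finset]
  ring

lemma three_mul_card_le_card [Fintype R] (hs : ∀ v ∈ s, v + 1 ∉ s ∧ v + 2 ∉ s) :
    3 * #s ≤ Fintype.card R :=
  card_blocks hs ▸ card_le_univ _

lemma three_mul_card_add_one_ne_card [Fintype R] [Nontrivial R]
    (hs : ∀ v ∈ s, v + 1 ∉ s ∧ v + 2 ∉ s ∧ v + 4 ∉ s) : 3 * #s + 1 ≠ Fintype.card R := by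
  intro hcard
  obtain ⟨u, hu⟩ : ∃ u, (blocks s)ᶜ = {u} := card_eq_one.1 <| by
    rw [card_compl, card_blocks fun v hv => ⟨(hs v hv).1, (hs v hv).2.1⟩]
    omega
  have uncovered : u ∉ s ∧ u - 1 ∉ s ∧ u - 2 ∉ s := by
    simpa [mem_blocks] using (hu ▸ mem_singleton_self u : u ∈ (blocks s)ᶜ)
  have covered : ∀ x, x ≠ u → x ∈ s ∨ x - 1 ∈ s ∨ x - 2 ∈ s := by
    intro x hx
    rw [← mem_blocks, ← notMem_compl, hu, mem_singleton]
    exact hx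
  have hu1 : u + 1 ∈ s := by
    have := covered (u + 1) (by simp)
    rw [add_sub_cancel_right, show u + 1 - 2 = u - 1 by ring] at this
    exact this.resolve_right (not_or.2 ⟨uncovered.1, uncovered.2.1⟩)
  have hu3 : u - 3 ∈ s := by
    have := covered (u - 1) (by simp)
    rw [show u - 1 - 1 = u - 2 by ring, show u - 1 - 2 = u - 3 by ring] at this
    exact (this.resolve_left uncovered.2.1).resolve_left uncovered.2.2
  exact (hs _ hu3).2.2 (by rwa [show u - 3 + 4 = u + 1 by ring])

end Blocks

lemma ZMod.natCast_ne_zero_of_lt {n a : ℕ} (ha : 0 < a) (han : a < n) : (a : ZMod n) ≠ 0 := by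
  rw [Ne, ZMod.natCast_eq_zero_iff]
  exact Nat.not_dvd_of_pos_of_lt ha han

lemma circGraph.add_notMem_of_isIndepSet {n : ℕ} {s I : Set (ZMod n)}
    (hI : (circGraph n s).IsIndepSet I) {c : ZMod n} (hc : c ∈ s) (hc0 : c ≠ 0) {v : ZMod n}
    (hv : v ∈ I) : v + c ∉ I :=
  fun h => hI h hv (by simpa using hc0) ⟨by simpa using hc0, Or.inl (by simpa using hc)⟩

theorem stmt10 (k : ℕ) (hk : 3 ≤ k) (I : Set (ZMod (3*k+1)))
    (hI : ∀ u ∈ I, ∀ v ∈ I, ¬ (circGraph (3*k+1) {1, 2, 4}).Adj u v) :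
    I.ncard ≤ k - 1 := by
  classical
  have : Fact (1 < 3*k+1) := ⟨by omega⟩
  have hindep : (circGraph (3*k+1) {1, 2, 4}).IsIndepSet I := fun u hu v hv _ => hI u hu v hv
  have gap {c : ZMod (3*k+1)} (hc : c ∈ ({1, 2, 4} : Set _)) (hc0 : c ≠ 0) {v}
      (hv : v ∈ I.toFinset) : v + c ∉ I.toFinset := by
    simpa using circGraph.add_notMem_of_isIndepSet hindep hc hc0 (Set.mem_toFinset.1 hv)
  have h2 : (2 : ZMod (3*k+1)) ≠ 0 := mod_cast ZMod.natCast_ne_zero_of_lt two_pos (by omega : 2 < 3*k+1)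
  have h4 : (4 : ZMod (3*k+1)) ≠ 0 := mod_cast ZMod.natCast_ne_zero_of_lt four_pos (by omega : 4 < 3*k+1)
  have hle := three_mul_card_le_card fun v hv =>
    ⟨gap (by simp) one_ne_zero hv, gap (by simp) h2 hv⟩
  have hne := three_mul_card_add_one_ne_card fun v hv =>
    ⟨gap (by simp) one_ne_zero hv, gap (by simp) h2 hv, gap (by simp) h4 hv⟩
  rw [ZMod.card] at hle hne
  rw [Set.ncard_eq_toFinset_card']
  omega
end

section
/- Let k ≥ 3 and G = C(3k+1; {1,2,4}). For every vertex cut S of G, |S| / c(G−S) ≥ 2k/(k−1). -/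
open SimpleGraph

namespace S11

variable {n : ℕ}

abbrev CG (n : ℕ) : SimpleGraph (ZMod n) := circGraph n {1,2,4}
abbrev Hg (S : Set (ZMod n)) : SimpleGraph ↥(Sᶜ) := (CG n).induce Sᶜ

/-- marker predicate -/
def IsMk (S : Set (ZMod n)) (v : ZMod n) : Prop :=
  v ∉ S ∧ v+1 ∈ S ∧ v+2 ∈ S ∧ v+4 ∈ S ∧ (v+3 ∈ S ∨ v-1 ∈ S)

section zmod
variable [NeZero n]

lemma val_add_nat (a : ZMod n) (j : ℕ) (hj : j < n) :
    (a + (j:ZMod n)).val = a.val + j ∨ (a + (j:ZMod n)).val + n = a.val + j := by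
  have hv : ((j : ZMod n)).val = j := ZMod.val_cast_of_lt hj
  have h := ZMod.val_add a (j : ZMod n)
  rw [hv] at h
  have ha : a.val < n := ZMod.val_lt a
  rcases Nat.lt_or_ge (a.val + j) n with h' | h'
  · left; rw [h, Nat.mod_eq_of_lt h']
  · right
    have h2 : (a.val + j) % n = a.val + j - n := by
      rw [Nat.mod_eq_sub_mod h', Nat.mod_eq_of_lt (by omega)]
    omega

lemma eq_of_val {a b : ZMod n} (h : a.val = b.val) : a = b := ZMod.val_injective n h

lemma reconstruct (w : ZMod n) {x : ZMod n} {e : ℕ} (h : (x - w).val = e) :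
    x = w + (e : ZMod n) := by
  have h2 : ((e : ℕ) : ZMod n) = x - w := by
    rw [← h]; exact ZMod.natCast_rightInverse (x - w)
  rw [h2]; ring

lemma val_sub_nat (a : ZMod n) (d : ℕ) (hd : d ≤ a.val) : (a - (d:ZMod n)).val = a.val - d := by
  have h1 : ((a.val : ℕ) : ZMod n) = a := ZMod.natCast_rightInverse a
  have h2 : a - (d:ZMod n) = (((a.val - d : ℕ)) : ZMod n) := by
    rw [Nat.cast_sub hd, h1]
  rw [h2, ZMod.val_cast_of_lt (by have := ZMod.val_lt a; omega)]

lemma val_neg_one' (h : 2 ≤ n) : ((-1 : ZMod n)).val = n - 1 := by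
  have h1 : ((n-1 : ℕ) : ZMod n) = -1 := by
    have h0 : ((n : ℕ) : ZMod n) = 0 := ZMod.natCast_self n
    push_cast [Nat.cast_sub (by omega : 1 ≤ n)]
    rw [h0]; ring
  rw [← h1, ZMod.val_cast_of_lt (by omega)]

lemma natcast_ne_zero (hn : 10 ≤ n) {j : ℕ} (h1 : 1 ≤ j) (h2 : j ≤ 9) : ((j:ℕ) : ZMod n) ≠ 0 := by
  intro h
  have hv : ((j:ℕ) : ZMod n).val = j := ZMod.val_cast_of_lt (by omega)
  rw [h] at hv
  simp only [ZMod.val_zero] at hv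
  omega

lemma natcast_zero_dvd {a : ℕ} (h : ((a:ℕ) : ZMod n) = 0) : n ∣ a := by
  have := (ZMod.natCast_eq_natCast_iff a 0 n).mp (by simpa using h)
  simpa [Nat.modEq_zero_iff_dvd] using this

end zmod

section adj
variable [NeZero n]

lemma adjZ (hn : 10 ≤ n) {x y : ZMod n}
    (h : y - x = 1 ∨ y - x = 2 ∨ y - x = 4) : (CG n).Adj x y := by
  have h1 : ((1:ℕ) : ZMod n) = 1 := by push_cast; ring
  have h2 : ((2:ℕ) : ZMod n) = 2 := by push_cast; ring
  have h4 : ((4:ℕ) : ZMod n) = 4 := by push_cast; ring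
  constructor
  · intro he
    subst he
    simp only [sub_self] at h
    rcases h with h | h | h
    · exact natcast_ne_zero hn (j:=1) (by norm_num) (by norm_num) (by rw [h1, ← h])
    · exact natcast_ne_zero hn (j:=2) (by norm_num) (by norm_num) (by rw [h2, ← h])
    · exact natcast_ne_zero hn (j:=4) (by norm_num) (by norm_num) (by rw [h4, ← h])
  · right
    simp only [Set.mem_insert_iff, Set.mem_singleton_iff]
    tauto

lemma reachZ (hn : 10 ≤ n) {S : Set (ZMod n)} {x y : ZMod n} (hx : x ∉ S) (hy : y ∉ S)
    (h : y - x = 1 ∨ y - x = 2 ∨ y - x = 4) :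
    (Hg S).Reachable ⟨x, hx⟩ ⟨y, hy⟩ := by
  have hadj : (Hg S).Adj ⟨x, hx⟩ ⟨y, hy⟩ := by
    show (CG n).Adj x y
    exact adjZ hn h
  exact hadj.reachable

end adj

section steps
variable [NeZero n]

lemma step_reach (hn : 10 ≤ n) {S : Set (ZMod n)} {v : ZMod n} (hv : v ∉ S)
    (hnm : ¬ IsMk S v) {d : ℕ} (hd1 : 1 ≤ d) (hd4 : d ≤ 4)
    (hgap : ∀ t : ℕ, 1 ≤ t → t < d → v + (t:ZMod n) ∈ S)
    (hvd : v + (d:ZMod n) ∉ S) :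
    (Hg S).Reachable ⟨v, hv⟩ ⟨v + (d:ZMod n), hvd⟩ := by
  interval_cases d
  · exact reachZ hn hv hvd (by push_cast; left; ring)
  · exact reachZ hn hv hvd (by push_cast; right; left; ring)
  · -- d = 3
    have g1 : v + 1 ∈ S := by have := hgap 1 le_rfl (by norm_num); push_cast at this; exact this
    have g2 : v + 2 ∈ S := by have := hgap 2 (by norm_num) (by norm_num); push_cast at this; exact this
    have g3 : v + 3 ∉ S := by push_cast at hvd; exact hvd
    by_cases h4 : v + 4 ∈ S
    · have hm1 : v - 1 ∉ S := fun hm => hnm ⟨hv, g1, g2, h4, Or.inr hm⟩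
      have r1 : (Hg S).Reachable ⟨v, hv⟩ ⟨v - 1, hm1⟩ :=
        (reachZ hn hm1 hv (by left; ring)).symm
      have r2 : (Hg S).Reachable ⟨v - 1, hm1⟩ ⟨v + (3:ℕ), hvd⟩ :=
        reachZ hn hm1 hvd (by push_cast; right; right; ring)
      exact r1.trans r2
    · have r1 : (Hg S).Reachable ⟨v, hv⟩ ⟨v + 4, h4⟩ :=
        reachZ hn hv h4 (by right; right; ring)
      have r2 : (Hg S).Reachable ⟨v + 4, h4⟩ ⟨v + (3:ℕ), hvd⟩ :=
        (reachZ hn hvd h4 (by push_cast; left; ring)).symm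
      exact r1.trans r2
  · exact reachZ hn hv hvd (by push_cast; right; right; ring)

lemma comp_all (hn : 10 ≤ n) {S : Set (ZMod n)}
    (hS2 : 1 < Nat.card (Hg S).ConnectedComponent)
    (κ : (Hg S).ConnectedComponent) :
    ∃ v, ∃ hv : v ∉ S, IsMk S v ∧ (Hg S).connectedComponentMk ⟨v, hv⟩ = κ := by
  classical
  by_contra hcon
  push_neg at hcon
  -- hcon : ∀ v hv, IsMk S v → mk ≠ κ
  obtain ⟨⟨v₀, hv₀⟩, hrep⟩ := κ.exists_rep
  have main : ∀ j : ℕ, ∀ w, ∀ hw : w ∉ S, (w - v₀).val ≤ j →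
      (Hg S).connectedComponentMk ⟨w, hw⟩ = κ := by
    intro j
    induction j using Nat.strong_induction_on with
    | _ j ih =>
      intro w hw hwj
      rcases Nat.eq_zero_or_pos (w - v₀).val with h0 | hpos
      · have hw0 : w = v₀ := by
          have : w - v₀ = 0 := by
            have := (ZMod.val_eq_zero (w - v₀)).mp h0
            exact this
          have := sub_eq_zero.mp this
          exact this
        subst hw0
        exact hrep
      · set m := (w - v₀).val with hm
        have hex : ∃ t : ℕ, 1 ≤ t ∧ t ≤ m ∧ w - (t:ZMod n) ∉ S := by
          refine ⟨m, hpos, le_rfl, ?_⟩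
          have : w - ((m:ℕ) : ZMod n) = v₀ := by
            have h1 : ((m:ℕ) : ZMod n) = w - v₀ := ZMod.natCast_rightInverse (w - v₀)
            rw [h1]; ring
          rw [this]; exact hv₀
        set d := Nat.find hex with hd
        obtain ⟨hd1, hdm, hxS⟩ := Nat.find_spec hex
        set x := w - (d : ZMod n) with hxdef
        have hgapmid : ∀ t : ℕ, 1 ≤ t → t < d → w - (t:ZMod n) ∈ S := by
          intro t ht1 htd
          by_contra hts
          exact Nat.find_min hex htd ⟨ht1, by omega, hts⟩
        have hxv : (x - v₀).val = m - d := by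
          have : x - v₀ = (w - v₀) - (d : ZMod n) := by rw [hxdef]; ring
          rw [this, val_sub_nat _ _ (by omega)]
        have hxκ : (Hg S).connectedComponentMk ⟨x, hxS⟩ = κ :=
          ih (m - d) (by omega) x hxS (by omega)
        have hnmx : ¬ IsMk S x := by
          intro hMk
          exact hcon x hxS hMk hxκ
        -- rewriting helper : x + t = w - (d - t)
        have hrw : ∀ t : ℕ, t ≤ d → x + (t : ZMod n) = w - ((d - t : ℕ) : ZMod n) := by
          intro t ht
          rw [hxdef, Nat.cast_sub ht]; ring
        have hd4 : d ≤ 4 := by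
          by_contra hd5
          push_neg at hd5
          apply hnmx
          refine ⟨hxS, ?_, ?_, ?_, Or.inl ?_⟩
          · have := hgapmid (d-1) (by omega) (by omega)
            have e : x + (1:ZMod n) = w - ((d-1 : ℕ) : ZMod n) := by
              have := hrw 1 (by omega); push_cast at this ⊢; rw [← this]
            rw [e]; exact this
          · have := hgapmid (d-2) (by omega) (by omega)
            have e : x + (2:ZMod n) = w - ((d-2 : ℕ) : ZMod n) := by
              have := hrw 2 (by omega); push_cast at this ⊢; rw [← this]
            rw [e]; exact this
          · have := hgapmid (d-4) (by omega) (by omega)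
            have e : x + (4:ZMod n) = w - ((d-4 : ℕ) : ZMod n) := by
              have := hrw 4 (by omega); push_cast at this ⊢; rw [← this]
            rw [e]; exact this
          · have := hgapmid (d-3) (by omega) (by omega)
            have e : x + (3:ZMod n) = w - ((d-3 : ℕ) : ZMod n) := by
              have := hrw 3 (by omega); push_cast at this ⊢; rw [← this]
            rw [e]; exact this
        have hxd : x + (d : ZMod n) = w := by rw [hxdef]; ring
        have hgap' : ∀ t : ℕ, 1 ≤ t → t < d → x + (t:ZMod n) ∈ S := by
          intro t ht1 htd
          rw [hrw t (by omega)]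
          exact hgapmid (d - t) (by omega) (by omega)
        have hwd : x + (d : ZMod n) ∉ S := by rw [hxd]; exact hw
        have hreach := step_reach hn hxS hnmx hd1 hd4 hgap' hwd
        have heqsub : (⟨x + (d:ZMod n), hwd⟩ : ↥(Sᶜ)) = ⟨w, hw⟩ := Subtype.ext hxd
        have := (SimpleGraph.ConnectedComponent.eq).mpr hreach
        rw [heqsub] at this
        rw [← this]
        exact hxκ
  exfalso
  have hnt : Nontrivial ((Hg S).ConnectedComponent) :=
    Finite.one_lt_card_iff_nontrivial.mp hS2
  obtain ⟨κ₁, κ₂, hne⟩ := hnt.exists_pair_ne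
  obtain ⟨⟨w₁, hw₁⟩, hr1⟩ := κ₁.exists_rep
  obtain ⟨⟨w₂, hw₂⟩, hr2⟩ := κ₂.exists_rep
  have e1 : κ₁ = κ := by rw [← hr1]; exact main _ w₁ hw₁ le_rfl
  have e2 : κ₂ = κ := by rw [← hr2]; exact main _ w₂ hw₂ le_rfl
  exact hne (e1.trans e2.symm)

end steps

section sep
variable [NeZero n]

/-- crossing case 1: relative to arbitrary w, using marker v -/
lemma core1 (hn : 10 ≤ n) {S : Set (ZMod n)} {v w x y : ZMod n} (hv : IsMk S v)
    (hx : x ∉ S) (hy : y ∉ S) {j : ℕ} (hj : j = 1 ∨ j = 2 ∨ j = 4)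
    (hxy : y = x + (j:ZMod n))
    (hle : (x - (w+1)).val ≤ (v - (w+1)).val)
    (hgt : (v - (w+1)).val < (y - (w+1)).val) : False := by
  have hj4 : j ≤ 4 := by rcases hj with h|h|h <;> omega
  have hj1 : 1 ≤ j := by rcases hj with h|h|h <;> omega
  have hyx : y - (w+1) = (x - (w+1)) + (j : ZMod n) := by rw [hxy]; ring
  set m := (v - (w+1)).val with hmdef
  have hxlt : (x - (w+1)).val < n := ZMod.val_lt _
  have hylt : (y - (w+1)).val < n := ZMod.val_lt _
  rcases val_add_nat (x - (w+1)) j (by omega) with hnw | hwrap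
  · -- no wrap: ψ y = ψ x + j
    rw [← hyx] at hnw
    set e := (y - (w+1)).val with hedef
    have he1 : m + 1 ≤ e := hgt
    have he4 : e ≤ m + 4 := by omega
    have hyrec : y = (w+1) + (e : ZMod n) := reconstruct (w+1) rfl
    have hvrec : v = (w+1) + (m : ZMod n) := reconstruct (w+1) rfl
    set r := e - m with hrdef
    have hyv : y = v + (r : ZMod n) := by
      rw [hyrec, hvrec]
      have : e = m + r := by omega
      rw [this, Nat.cast_add]; ring
    have hr1 : 1 ≤ r := by omega
    have hr4 : r ≤ 4 := by omega
    interval_cases r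
    · refine hy ?_
      rw [hyv, show v + ((1:ℕ):ZMod n) = v + 1 from by push_cast; ring]
      exact hv.2.1
    · refine hy ?_
      rw [hyv, show v + ((2:ℕ):ZMod n) = v + 2 from by push_cast; ring]
      exact hv.2.2.1
    · -- r = 3 : y = v + 3
      have hy3 : y = v + 3 := by rw [hyv]; push_cast; ring
      rcases hj with hj' | hj' | hj'
      · subst hj'
        have : x = v + 2 := by
          have := hxy; rw [hy3] at this; push_cast at this
          linear_combination -this
        exact hx (by rw [this]; exact hv.2.2.1)
      · subst hj'
        have : x = v + 1 := by
          have := hxy; rw [hy3] at this; push_cast at this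
          linear_combination -this
        exact hx (by rw [this]; exact hv.2.1)
      · subst hj'
        have hxv : x = v - 1 := by
          have := hxy; rw [hy3] at this; push_cast at this
          linear_combination -this
        rcases hv.2.2.2.2 with h3 | h3
        · exact hy (by rw [hy3]; exact h3)
        · exact hx (by rw [hxv]; exact h3)
    · refine hy ?_
      rw [hyv, show v + ((4:ℕ):ZMod n) = v + 4 from by push_cast; ring]
      exact hv.2.2.2.1
  · -- wrap : ψ y + n = ψ x + j : contradiction with ψ y > ψ x
    rw [← hyx] at hwrap
    omega

/-- crossing case 2: using marker w, descending edge -/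
lemma core2 (hn : 10 ≤ n) {S : Set (ZMod n)} {w x y : ZMod n} (hw : IsMk S w)
    (hx : x ∉ S) (hy : y ∉ S) {j : ℕ} (hj : j = 1 ∨ j = 2 ∨ j = 4)
    (hxy : y = x + (j:ZMod n))
    (hlt : (y - (w+1)).val < (x - (w+1)).val) : False := by
  have hj4 : j ≤ 4 := by rcases hj with h|h|h <;> omega
  have hj1 : 1 ≤ j := by rcases hj with h|h|h <;> omega
  have hyx : y - (w+1) = (x - (w+1)) + (j : ZMod n) := by rw [hxy]; ring
  have hxlt : (x - (w+1)).val < n := ZMod.val_lt _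
  rcases val_add_nat (x - (w+1)) j (by omega) with hnw | hwrap
  · rw [← hyx] at hnw; omega
  · rw [← hyx] at hwrap
    set e := (y - (w+1)).val with hedef
    have he3 : e ≤ 3 := by omega
    have hyrec : y = (w+1) + (e : ZMod n) := reconstruct (w+1) rfl
    interval_cases e
    · refine hy ?_
      rw [hyrec, show (w+1) + ((0:ℕ):ZMod n) = w + 1 from by push_cast; ring]
      exact hw.2.1
    · refine hy ?_
      rw [hyrec, show (w+1) + ((1:ℕ):ZMod n) = w + 2 from by push_cast; ring]
      exact hw.2.2.1
    · -- e = 2 : y = w + 3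
      have hy3 : y = w + 3 := by rw [hyrec]; push_cast; ring
      rcases hj with hj' | hj' | hj'
      · subst hj'
        have : x = w + 2 := by
          have := hxy; rw [hy3] at this; push_cast at this
          linear_combination -this
        exact hx (by rw [this]; exact hw.2.2.1)
      · subst hj'
        have : x = w + 1 := by
          have := hxy; rw [hy3] at this; push_cast at this
          linear_combination -this
        exact hx (by rw [this]; exact hw.2.1)
      · subst hj'
        have hxv : x = w - 1 := by
          have := hxy; rw [hy3] at this; push_cast at this
          linear_combination -this
        rcases hw.2.2.2.2 with h3 | h3
        · exact hy (by rw [hy3]; exact h3)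
        · exact hx (by rw [hxv]; exact h3)
    · refine hy ?_
      rw [hyrec, show (w+1) + ((3:ℕ):ZMod n) = w + 4 from by push_cast; ring]
      exact hw.2.2.2.1

lemma edge_pres (hn : 10 ≤ n) {S : Set (ZMod n)} {v w : ZMod n}
    (hv : IsMk S v) (hw : IsMk S w) {a b : ↥(Sᶜ)} (hadj : (Hg S).Adj a b)
    (ha : (a.1 - (w+1)).val ≤ (v - (w+1)).val) :
    (b.1 - (w+1)).val ≤ (v - (w+1)).val := by
  by_contra hb
  push_neg at hb
  have hadj' : (CG n).Adj a.1 b.1 := hadj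
  obtain ⟨hne, hor⟩ := hadj'
  have hxa : a.1 ∉ S := a.2
  have hxb : b.1 ∉ S := b.2
  rcases hor with h | h
  · -- a - b ∈ {1,2,4} : a = b + j
    simp only [Set.mem_insert_iff, Set.mem_singleton_iff] at h
    have hab : ∃ j : ℕ, (j = 1 ∨ j = 2 ∨ j = 4) ∧ a.1 = b.1 + (j : ZMod n) := by
      rcases h with h|h|h
      · exact ⟨1, by tauto, by push_cast; linear_combination h⟩
      · exact ⟨2, by tauto, by push_cast; linear_combination h⟩
      · exact ⟨4, by tauto, by push_cast; linear_combination h⟩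
    obtain ⟨j, hj, hab⟩ := hab
    exact core2 hn hw hxb hxa hj hab (by omega)
  · -- b - a ∈ {1,2,4} : b = a + j
    simp only [Set.mem_insert_iff, Set.mem_singleton_iff] at h
    have hab : ∃ j : ℕ, (j = 1 ∨ j = 2 ∨ j = 4) ∧ b.1 = a.1 + (j : ZMod n) := by
      rcases h with h|h|h
      · exact ⟨1, by tauto, by push_cast; linear_combination h⟩
      · exact ⟨2, by tauto, by push_cast; linear_combination h⟩
      · exact ⟨4, by tauto, by push_cast; linear_combination h⟩
    obtain ⟨j, hj, hab⟩ := hab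
    exact core1 hn hv hxa hxb hj hab ha hb

lemma marker_ne (hn : 10 ≤ n) {S : Set (ZMod n)} {v w : ZMod n}
    (hv : IsMk S v) (hw : IsMk S w) (hne : v ≠ w)
    (heq : (Hg S).connectedComponentMk ⟨v, hv.1⟩ = (Hg S).connectedComponentMk ⟨w, hw.1⟩) :
    False := by
  have hreach : (Hg S).Reachable ⟨v, hv.1⟩ ⟨w, hw.1⟩ :=
    (SimpleGraph.ConnectedComponent.eq).mp heq
  obtain ⟨p⟩ := hreach
  set m := (v - (w+1)).val with hm
  have walk_pres : ∀ {a b : ↥(Sᶜ)}, (Hg S).Walk a b →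
      (a.1 - (w+1)).val ≤ m → (b.1 - (w+1)).val ≤ m := by
    intro a b p
    induction p with
    | nil => exact id
    | cons h q ih => intro ha; exact ih (edge_pres hn hv hw h ha)
  have hw' : (((⟨w, hw.1⟩ : ↥(Sᶜ)).1 : ZMod n) - (w+1)).val ≤ m := walk_pres p le_rfl
  have hwval : ((w : ZMod n) - (w+1)).val = n - 1 := by
    have : (w : ZMod n) - (w+1) = -1 := by ring
    rw [this, val_neg_one' (by omega)]
  have hmlt : m < n := ZMod.val_lt _
  have hmne : m ≠ n - 1 := by
    intro hcon
    apply hne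
    have : (v - (w+1)).val = ((w:ZMod n) - (w+1)).val := by rw [← hm, hcon, hwval]
    have h2 := eq_of_val this
    have := sub_left_injective h2
    exact this
  simp only at hw'
  omega

end sep

section count
variable [NeZero n]

lemma card_comp_eq (hn : 10 ≤ n) {S : Set (ZMod n)}
    (hS2 : 1 < Nat.card (Hg S).ConnectedComponent) :
    Nat.card (Hg S).ConnectedComponent = {x | IsMk S x}.ncard := by
  rw [← Nat.card_coe_set_eq]
  refine (Nat.card_eq_of_bijective
    (fun p : ↥{x | IsMk S x} => (Hg S).connectedComponentMk ⟨p.1, p.2.1⟩) ⟨?_, ?_⟩).symm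
  · rintro ⟨a, ha⟩ ⟨b, hb⟩ hab
    by_contra hne
    have : a ≠ b := fun h => hne (Subtype.ext h)
    exact marker_ne hn ha hb this hab
  · intro κ
    obtain ⟨v, hv, hMk, heq⟩ := comp_all hn hS2 κ
    exact ⟨⟨v, hMk⟩, heq⟩

def Pset (S : Set (ZMod n)) : Set (ZMod n) :=
  ((· + (1:ZMod n)) '' {x | IsMk S x}) ∪ ((· + (2:ZMod n)) '' {x | IsMk S x})

lemma Pset_subset {S : Set (ZMod n)} : Pset S ⊆ S := by
  rintro y (⟨v, hv, rfl⟩ | ⟨v, hv, rfl⟩)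
  · exact hv.2.1
  · exact hv.2.2.1

lemma Pset_card {S : Set (ZMod n)} : (Pset S).ncard = 2 * {x | IsMk S x}.ncard := by
  have hinj1 : Function.Injective (· + (1:ZMod n)) := add_left_injective _
  have hinj2 : Function.Injective (· + (2:ZMod n)) := add_left_injective _
  have hdisj : Disjoint ((· + (1:ZMod n)) '' {x | IsMk S x})
      ((· + (2:ZMod n)) '' {x | IsMk S x}) := by
    rw [Set.disjoint_left]
    rintro y ⟨v, hv, rfl⟩ ⟨u, hu, huv⟩
    simp only at huv
    have : v = u + 1 := by linear_combination -huv
    exact hv.1 (this ▸ hu.2.1)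
  rw [Pset, Set.ncard_union_eq hdisj (Set.toFinite _) (Set.toFinite _),
    Set.ncard_image_of_injective _ hinj1, Set.ncard_image_of_injective _ hinj2]
  ring

lemma mem_Pset {S : Set (ZMod n)} {y : ZMod n} :
    y ∈ Pset S ↔ (∃ v, IsMk S v ∧ y = v + 1) ∨ (∃ v, IsMk S v ∧ y = v + 2) := by
  simp only [Pset, Set.mem_union, Set.mem_image, Set.mem_setOf_eq]
  constructor
  · rintro (⟨v, hv, rfl⟩ | ⟨v, hv, rfl⟩)
    · exact Or.inl ⟨v, hv, rfl⟩
    · exact Or.inr ⟨v, hv, rfl⟩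
  · rintro (⟨v, hv, rfl⟩ | ⟨v, hv, rfl⟩)
    · exact Or.inl ⟨v, hv, rfl⟩
    · exact Or.inr ⟨v, hv, rfl⟩

lemma closed_contra {S : Set (ZMod n)} {δ : ZMod n} (t : ℕ)
    (ht : δ * (t : ZMod n) = 1)
    (hcl : ∀ x, IsMk S x → IsMk S (x + δ)) (hne : ∃ x, IsMk S x) : False := by
  obtain ⟨x₀, hx₀⟩ := hne
  have hall : ∀ i : ℕ, IsMk S (x₀ + δ * (i:ZMod n)) := by
    intro i
    induction i with
    | zero => simpa using hx₀
    | succ i ih =>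
      have h2 := hcl _ ih
      have he : x₀ + δ * (i:ZMod n) + δ = x₀ + δ * ((i+1 : ℕ) : ZMod n) := by
        push_cast; ring
      rwa [he] at h2
  have h1 := hall t
  rw [ht] at h1
  exact h1.1 hx₀.2.1

lemma chain_mk {S : Set (ZMod n)} {vstar : ZMod n}
    (hcl : ∀ x, IsMk S x → x ≠ vstar → IsMk S (x + 3)) {x : ZMod n} (hx : IsMk S x) :
    ∀ i : ℕ, (∀ j : ℕ, j < i → x + 3*(j:ZMod n) ≠ vstar) → IsMk S (x + 3*(i:ZMod n)) := by
  intro i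
  induction i with
  | zero => intro _; simpa using hx
  | succ i ih =>
    intro hm
    have hprev : IsMk S (x + 3*(i:ZMod n)) := ih (fun j hj => hm j (by omega))
    have hstep := hcl _ hprev (hm i (by omega))
    have he : x + 3*(i:ZMod n) + 3 = x + 3*((i+1 : ℕ) : ZMod n) := by push_cast; ring
    rwa [he] at hstep

lemma bigchain {k : ℕ} (hn : n = 3*k+1) (hk : 3 ≤ k) {S : Set (ZMod n)} {vstar : ZMod n}
    (h3c : 3 * {x | IsMk S x}.ncard ≤ n)
    (hcl : ∀ x, IsMk S x → x ≠ vstar → IsMk S (x + 3)) {x : ZMod n} (hx : IsMk S x)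
    (hmiss : ∀ j : ℕ, j < 2*k-1 → x + 3*(j:ZMod n) ≠ vstar) : False := by
  classical
  have hchain : ∀ i : ℕ, i < 2*k → IsMk S (x + 3*(i:ZMod n)) := by
    intro i hi
    exact chain_mk hcl hx i (fun j hj => hmiss j (by omega))
  set F : Finset (ZMod n) := (Finset.range (2*k)).image (fun i => x + 3*((i:ℕ):ZMod n)) with hF
  have hcard : F.card = 2*k := by
    rw [hF, Finset.card_image_of_injOn, Finset.card_range]
    intro i hi j hj hij
    simp only [Finset.mem_coe, Finset.mem_range] at hi hj
    simp only at hij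
    have h3 : 3*((i:ℕ):ZMod n) = 3*((j:ℕ):ZMod n) := by
      have := hij
      exact add_left_cancel this
    have hcast : ((3*i : ℕ) : ZMod n) = ((3*j : ℕ) : ZMod n) := by push_cast; exact h3
    have hmod := (ZMod.natCast_eq_natCast_iff _ _ _).mp hcast
    rcases Nat.le_total i j with hle | hle
    · have hdvd := (Nat.modEq_iff_dvd' (by omega)).mp hmod
      have h6 : 3*j - 3*i < 2*n := by omega
      rcases hdvd with ⟨c, hc⟩
      have hc2 : c < 2 := by
        refine Nat.lt_of_mul_lt_mul_left (a := n) ?_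
        omega
      interval_cases c <;> omega
    · have hdvd := (Nat.modEq_iff_dvd' (by omega)).mp hmod.symm
      have h6 : 3*i - 3*j < 2*n := by omega
      rcases hdvd with ⟨c, hc⟩
      have hc2 : c < 2 := by
        refine Nat.lt_of_mul_lt_mul_left (a := n) ?_
        omega
      interval_cases c <;> omega
  have hsub : (F : Set (ZMod n)) ⊆ {x | IsMk S x} := by
    intro y hy
    simp only [hF, Finset.coe_image, Finset.coe_range, Set.mem_image, Set.mem_Iio] at hy
    obtain ⟨i, hi, rfl⟩ := hy
    exact hchain i hi
  have hle := Set.ncard_le_ncard hsub (Set.toFinite _)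
  rw [Set.ncard_coe_finset, hcard] at hle
  omega

end count

section mainlemma
variable [NeZero n]

lemma s_ge {k : ℕ} (hn : n = 3*k+1) (hk : 3 ≤ k) {S : Set (ZMod n)}
    (h3c : 3 * {x | IsMk S x}.ncard ≤ n)
    (h2c : 2 * {x | IsMk S x}.ncard ≤ S.ncard)
    (hMne : ∃ x, IsMk S x)
    (hsle : S.ncard ≤ 2 * {x | IsMk S x}.ncard + 1) : False := by
  classical
  have hn10 : 10 ≤ n := by omega
  have h0 : ((3*k+1 : ℕ) : ZMod n) = 0 := by rw [← hn]; exact ZMod.natCast_self n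
  rcases Nat.lt_or_ge S.ncard (2 * {x | IsMk S x}.ncard + 1) with hcase | hcase
  · -- S.ncard = 2c : S = Pset S
    have hSeq : Pset S = S := by
      refine Set.eq_of_subset_of_ncard_le Pset_subset ?_ (Set.toFinite _)
      rw [Pset_card]; omega
    have hcl : ∀ x, IsMk S x → IsMk S (x + 3) := by
      intro x hx
      have hx4 : x + 4 ∈ S := hx.2.2.2.1
      rw [← hSeq] at hx4
      rcases mem_Pset.mp hx4 with ⟨v, hv, he⟩ | ⟨v, hv, he⟩
      · have : v = x + 3 := by linear_combination -he
        rwa [this] at hv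
      · have : v = x + 2 := by linear_combination -he
        exact absurd (this ▸ hx.2.2.1) hv.1
    refine closed_contra (δ := (3 : ZMod n)) (2*k+1) ?_ hcl hMne
    push_cast at h0 ⊢
    linear_combination 2*h0
  · -- S.ncard = 2c+1
    have hcard : S.ncard = 2 * {x | IsMk S x}.ncard + 1 := by omega
    have hdiff : (S \ Pset S).ncard = 1 := by
      rw [Set.ncard_diff Pset_subset (Set.toFinite _), Pset_card]
      omega
    obtain ⟨z, hz⟩ := Set.ncard_eq_one.mp hdiff
    have hzmem : z ∈ S \ Pset S := by rw [hz]; exact Set.mem_singleton z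
    have hzS : z ∈ S := hzmem.1
    have hSP : ∀ y, y ∈ S → y ∈ Pset S ∨ y = z := by
      intro y hy
      by_cases h : y ∈ Pset S
      · exact Or.inl h
      · right
        have : y ∈ S \ Pset S := ⟨hy, h⟩
        rw [hz] at this
        exact this
    set vstar := z - 4 with hvstar
    have hcl : ∀ x, IsMk S x → x ≠ vstar → IsMk S (x + 3) := by
      intro x hx hxne
      have hx4 : x + 4 ∈ S := hx.2.2.2.1
      rcases hSP _ hx4 with hp | hpz
      · rcases mem_Pset.mp hp with ⟨v, hv, he⟩ | ⟨v, hv, he⟩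
        · have : v = x + 3 := by linear_combination -he
          rwa [this] at hv
        · have : v = x + 2 := by linear_combination -he
          exact absurd (this ▸ hx.2.2.1) hv.1
      · exfalso
        apply hxne
        rw [hvstar, ← hpz]
        ring
    obtain ⟨x₀, hx₀⟩ := hMne
    have mstar : IsMk S vstar := by
      by_cases hex : ∃ j : ℕ, x₀ + 3*((j:ℕ):ZMod n) = vstar
      · have hs := Nat.find_spec hex
        rw [← hs]
        exact chain_mk hcl hx₀ (Nat.find hex) (fun j hj => Nat.find_min hex hj)
      · push_neg at hex
        exact (bigchain hn hk h3c hcl hx₀ (fun j _ => hex j)).elim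
    have hdown : ∃ u, IsMk S u ∧ ¬ IsMk S (u + (-3)) := by
      by_contra hd
      push_neg at hd
      refine closed_contra (δ := (-3 : ZMod n)) k ?_ hd ⟨x₀, hx₀⟩
      push_cast at h0 ⊢
      linear_combination -h0
    obtain ⟨u, hu, hu3⟩ := hdown
    have hu3S : u + 3 ∉ S := by
      intro hmem
      rcases hSP _ hmem with hp | hpz
      · rcases mem_Pset.mp hp with ⟨v, hv, he⟩ | ⟨v, hv, he⟩
        · have hveq : v = u + 2 := by linear_combination -he
          exact hv.1 (hveq ▸ hu.2.2.1)
        · have hveq : v = u + 1 := by linear_combination -he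
          exact hv.1 (hveq ▸ hu.2.1)
      · have hvs : vstar = u - 1 := by rw [hvstar, ← hpz]; ring
        have hm := mstar.2.1
        rw [hvs, show u - 1 + 1 = u from by ring] at hm
        exact hu.1 hm
    have hum1 : u - 1 ∈ S := hu.2.2.2.2.resolve_left hu3S
    rcases hSP _ hum1 with hp | hpz
    · rcases mem_Pset.mp hp with ⟨v, hv, he⟩ | ⟨v, hv, he⟩
      · have hveq : v = u - 2 := by linear_combination -he
        have h2 := hv.2.2.1
        rw [hveq, show u - 2 + 2 = u from by ring] at h2
        exact hu.1 h2
      · have hveq : v = u - 3 := by linear_combination -he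
        apply hu3
        have : u + (-3) = v := by rw [hveq]; ring
        rw [this]; exact hv
    · -- u - 1 = z : vstar = u - 5
      have hvs : vstar = u - 5 := by rw [hvstar, ← hpz]; ring
      refine bigchain hn hk h3c hcl hu ?_
      intro j hj heq
      have h35 : ((3*j+5 : ℕ) : ZMod n) = 0 := by
        push_cast
        rw [hvs] at heq
        linear_combination heq
      have hdvd := natcast_zero_dvd h35
      rcases hdvd with ⟨c2, hc2⟩
      have hlt : c2 < 3 := Nat.lt_of_mul_lt_mul_left (a := n) (by omega)
      interval_cases c2 <;> omega

end mainlemma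

end S11

theorem stmt11 (k : ℕ) (hk : 3 ≤ k) (S : Set (ZMod (3*k+1)))
    (hS : IsVertexCut (circGraph (3*k+1) {1, 2, 4}) S) :
    (2 * (k : ℝ)) / ((k : ℝ) - 1) ≤
      (S.ncard : ℝ) / (numComp (circGraph (3*k+1) {1, 2, 4}) S : ℝ) := by
  haveI : NeZero (3*k+1) := ⟨by omega⟩
  have hn10 : 10 ≤ 3*k+1 := by omega
  have hS2 : 1 < Nat.card (S11.Hg S).ConnectedComponent := hS
  set c := numComp (circGraph (3*k+1) {1, 2, 4}) S with hc
  have hceq : c = Nat.card (S11.Hg S).ConnectedComponent := rfl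
  have hcM : c = {x | S11.IsMk S x}.ncard := by rw [hceq]; exact S11.card_comp_eq hn10 hS2
  have hcT : c ≤ (Sᶜ).ncard := by
    rw [hceq, ← Nat.card_coe_set_eq]
    exact Nat.card_le_card_of_surjective _ (fun κ => κ.exists_rep)
  have hsum : S.ncard + (Sᶜ).ncard = 3*k+1 := by
    rw [Set.ncard_add_ncard_compl]
    simp [Nat.card_zmod]
  have h2c : 2 * {x | S11.IsMk S x}.ncard ≤ S.ncard := by
    have h := Set.ncard_le_ncard (S11.Pset_subset (S := S)) (Set.toFinite _)
    rw [S11.Pset_card] at h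
    exact h
  have hc2 : 1 < c := hS
  have h3c : 3 * {x | S11.IsMk S x}.ncard ≤ 3*k+1 := by omega
  have hMne : ∃ x, S11.IsMk S x := by
    obtain ⟨x, hx⟩ := Set.nonempty_of_ncard_ne_zero
      (s := {x | S11.IsMk S x}) (by omega)
    exact ⟨x, hx⟩
  have key : 2 * c + 2 ≤ S.ncard := by
    by_contra hcon
    push_neg at hcon
    rw [hcM] at hcon
    exact S11.s_ge rfl hk h3c h2c hMne (by omega)
  have hnat : 2*k*c + S.ncard ≤ S.ncard * k := by
    rcases eq_or_lt_of_le key with heq | hlt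
    · have hck : c + 1 ≤ k := by omega
      calc 2*k*c + S.ncard = 2*k*c + (2*c+2) := by omega
        _ ≤ 2*k*c + 2*k := by omega
        _ = (2*c+2)*k := by ring
        _ = S.ncard * k := by rw [heq]
    · have hsle : S.ncard + 1 ≤ 3*k := by omega
      have hrw : 2*c + (S.ncard - 2*c) = S.ncard := by omega
      have h1 : 3*k ≤ (S.ncard - 2*c) * k := Nat.mul_le_mul_right k (by omega)
      calc 2*k*c + S.ncard ≤ 2*c*k + 3*k := by
            have he : 2*k*c = 2*c*k := by ring
            omega
        _ ≤ 2*c*k + (S.ncard - 2*c)*k := by omega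
        _ = (2*c + (S.ncard - 2*c)) * k := by ring
        _ = S.ncard * k := by rw [hrw]
  have hc0 : (0:ℝ) < (c:ℝ) := by
    have : 0 < c := by omega
    exact_mod_cast this
  have hk1 : (0:ℝ) < (k:ℝ) - 1 := by
    have h3 : (3:ℝ) ≤ (k:ℝ) := by exact_mod_cast hk
    linarith
  rw [div_le_div_iff₀ hk1 hc0]
  have hcast : ((2*k*c + S.ncard : ℕ) : ℝ) ≤ ((S.ncard * k : ℕ) : ℝ) := by
    exact_mod_cast hnat
  push_cast at hcast
  nlinarith [hcast]
end

section
/- Let k ≥ 3 and G = C(3k+1; {1,2,4}). For e = v_1 v_2, the set S = {v_3, v_{3k−1}, v_{3k+1}} ∪ ⋃_{t=2}^{k−1} {v_{3t−1}, v_{3t}} is a vertex cut of G−e with |S| = 2k−1 and c((G−e)−S) = k−1; hence τ(G−e) ≤ (2k−1)/(k−1) < 2k/(k−1). -/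
open SimpleGraph

namespace Stmt14Aux

/-- natural-number version of membership in the cut set `S` (via `ZMod.val`). -/
def inS (k m : ℕ) : Prop :=
  m = 3 ∨ m = 3*k-1 ∨ m = 0 ∨
    ∃ t : ℕ, 2 ≤ t ∧ t ≤ k-1 ∧ (m = 3*t-1 ∨ m = 3*t)

/-- natural-number version of membership in the complement of `S`. -/
def inT (k m : ℕ) : Prop :=
  m = 1 ∨ m = 2 ∨ m = 4 ∨ m = 3*k ∨ ∃ t : ℕ, 2 ≤ t ∧ t ≤ k-1 ∧ m = 3*t+1

lemma inS_lt {k m : ℕ} (hk : 3 ≤ k) (h : inS k m) : m < 3*k+1 := by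
  obtain (h|h|h|⟨t,ht1,ht2,ht⟩) := h <;> omega

lemma inT_lt {k m : ℕ} (hk : 3 ≤ k) (h : inT k m) : m < 3*k+1 := by
  obtain (h|h|h|h|⟨t,ht1,ht2,ht⟩) := h <;> omega

lemma not_inS_iff_inT {k m : ℕ} (hk : 3 ≤ k) (hm : m < 3*k+1) : ¬ inS k m ↔ inT k m := by
  constructor
  · intro h
    unfold inS at h
    push_neg at h
    obtain ⟨h1, h2, h3, h4⟩ := h
    have h5 := h4 ((m+1)/3)
    by_cases hm1 : m = 1 ∨ m = 2 ∨ m = 4 ∨ m = 3*k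
    · unfold inT; tauto
    · push_neg at hm1
      refine Or.inr (Or.inr (Or.inr (Or.inr ⟨(m+1)/3, ?_, ?_, ?_⟩))) <;> omega
  · intro hT hS
    obtain (h|h|h|h|⟨t,ht1,ht2,ht⟩) := hT <;>
      obtain (g|g|g|⟨s,hs1,hs2,hs⟩) := hS <;> omega

/-- label of a vertex (by its val) giving its connected component. -/
def lab (k m : ℕ) : ℕ :=
  if m = 2 ∨ m = 4 then 0
  else if m = 1 ∨ m = 3*k-2 ∨ m = 3*k then 1
  else (m-1)/3

lemma lab_classify {k m : ℕ} (hk : 3 ≤ k) (h : inT k m) :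
    (lab k m = 0 ∧ (m = 2 ∨ m = 4)) ∨
    (lab k m = 1 ∧ (m = 1 ∨ m = 3*k-2 ∨ m = 3*k)) ∨
    (2 ≤ lab k m ∧ lab k m ≤ k-2 ∧ m = 3*(lab k m)+1) := by
  obtain (h|h|h|h|⟨t,ht1,ht2,ht⟩) := h <;> unfold lab <;> split_ifs <;> omega

/-- natural-number version of adjacency in the circulant graph. -/
def adjN (k a b : ℕ) : Prop :=
  b + 1 = a ∨ b + 1 = a + (3*k+1) ∨ b + 2 = a ∨ b + 2 = a + (3*k+1) ∨
  b + 4 = a ∨ b + 4 = a + (3*k+1) ∨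
  a + 1 = b ∨ a + 1 = b + (3*k+1) ∨ a + 2 = b ∨ a + 2 = b + (3*k+1) ∨
  a + 4 = b ∨ a + 4 = b + (3*k+1)

set_option maxHeartbeats 2000000 in
lemma lab_adj {k a b : ℕ} (hk : 3 ≤ k) (ha : inT k a) (hb : inT k b)
    (hadj : adjN k a b)
    (hdel : ¬((a = 1 ∧ b = 2) ∨ (a = 2 ∧ b = 1))) :
    lab k a = lab k b := by
  unfold adjN at hadj
  obtain (h|h|h|h|⟨t,ht1,ht2,ht⟩) := ha <;>
    obtain (g|g|g|g|⟨s,hs1,hs2,hs⟩) := hb <;>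
    unfold lab <;> split_ifs <;> omega

end Stmt14Aux


theorem stmt14 (k : ℕ) (hk : 3 ≤ k) :
    let G := circGraph (3*k+1) {1, 2, 4}
    let G' := G.deleteEdges {s(((1 : ℕ) : ZMod (3*k+1)), ((2 : ℕ) : ZMod (3*k+1)))}
    let S : Set (ZMod (3*k+1)) :=
      {v | v = ((3 : ℕ) : ZMod (3*k+1)) ∨ v = ((3*k-1 : ℕ) : ZMod (3*k+1)) ∨
        v = ((3*k+1 : ℕ) : ZMod (3*k+1)) ∨
        ∃ t : ℕ, 2 ≤ t ∧ t ≤ k - 1 ∧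
          (v = ((3*t-1 : ℕ) : ZMod (3*k+1)) ∨ v = ((3*t : ℕ) : ZMod (3*k+1)))}
    IsVertexCut G' S ∧ S.ncard = 2*k - 1 ∧ numComp G' S = k - 1 ∧
      toughness G' ≤ (2*(k : ℝ) - 1) / ((k : ℝ) - 1) ∧
      (2*(k : ℝ) - 1) / ((k : ℝ) - 1) < (2*(k : ℝ)) / ((k : ℝ) - 1) := by
  intro G G' S
  haveI : NeZero (3*k+1) := ⟨by omega⟩
  -- basic cast lemma
  have hcast : ∀ (c : ℕ), c < 3*k+1 → ∀ v : ZMod (3*k+1),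
      (v = (c : ZMod (3*k+1)) ↔ v.val = c) := by
    intro c hc v
    constructor
    · rintro rfl; exact ZMod.val_cast_of_lt hc
    · intro h; rw [← ZMod.natCast_zmod_val v, h]
  have hSmem : ∀ v : ZMod (3*k+1), v ∈ S ↔ Stmt14Aux.inS k v.val := by
    intro v
    show (v = _ ∨ v = _ ∨ v = _ ∨ _) ↔ _
    unfold Stmt14Aux.inS
    refine or_congr (hcast 3 (by omega) v) (or_congr (hcast (3*k-1) (by omega) v)
      (or_congr ?_ (exists_congr fun t => and_congr_right fun ht1 =>
        and_congr_right fun ht2 =>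
        or_congr (hcast (3*t-1) (by omega) v) (hcast (3*t) (by omega) v))))
    · rw [ZMod.natCast_self]
      constructor
      · rintro rfl; exact ZMod.val_zero
      · intro h; exact (ZMod.val_eq_zero v).mp h
  have hTmem : ∀ v : ZMod (3*k+1), v ∈ Sᶜ ↔ Stmt14Aux.inT k v.val := by
    intro v
    rw [Set.mem_compl_iff, hSmem v]
    exact Stmt14Aux.not_inS_iff_inT hk (ZMod.val_lt v)
  -- arithmetic of sums mod n
  have hmod : ∀ a b c : ℕ, a < 3*k+1 → b < 3*k+1 → c < 3*k+1 →
      ((b + c) % (3*k+1) = a ↔ (b + c = a ∨ b + c = a + (3*k+1))) := by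
    intro a b c ha hb hc
    rcases Nat.lt_or_ge (b+c) (3*k+1) with h|h
    · rw [Nat.mod_eq_of_lt h]; omega
    · rw [Nat.mod_eq_sub_mod h, Nat.mod_eq_of_lt (by omega)]; omega
  have hdiff : ∀ (u v : ZMod (3*k+1)) (c : ℕ), c < 3*k+1 →
      (u - v = (c : ZMod (3*k+1)) ↔
        (v.val + c = u.val ∨ v.val + c = u.val + (3*k+1))) := by
    intro u v c hc
    rw [sub_eq_iff_eq_add]
    constructor
    · intro h
      have h2 : u.val = ((c : ZMod (3*k+1)) + v).val := by rw [h]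
      rw [ZMod.val_add, ZMod.val_cast_of_lt hc] at h2
      have h3 := (hmod u.val c v.val (ZMod.val_lt u) hc (ZMod.val_lt v)).mp h2.symm
      omega
    · intro h
      apply ZMod.val_injective
      rw [ZMod.val_add, ZMod.val_cast_of_lt hc]
      exact ((hmod u.val c v.val (ZMod.val_lt u) hc (ZMod.val_lt v)).mpr (by omega)).symm
  have hmem124 : ∀ x : ZMod (3*k+1), x ∈ ({1,2,4} : Set (ZMod (3*k+1))) ↔
      (x = ((1:ℕ) : ZMod (3*k+1)) ∨ x = ((2:ℕ) : ZMod (3*k+1)) ∨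
        x = ((4:ℕ) : ZMod (3*k+1))) := by
    intro x
    simp only [Set.mem_insert_iff, Set.mem_singleton_iff, Nat.cast_one, Nat.cast_ofNat]
  -- adjacency characterization
  have hadj : ∀ u v : ZMod (3*k+1), G'.Adj u v ↔
      (Stmt14Aux.adjN k u.val v.val ∧ u.val ≠ v.val ∧
        ¬((u.val = 1 ∧ v.val = 2) ∨ (u.val = 2 ∧ v.val = 1))) := by
    intro u v
    have hne : (u ≠ v) ↔ u.val ≠ v.val :=
      not_congr ⟨fun h => by rw [h], fun h => ZMod.val_injective _ h⟩
    have key : G'.Adj u v ↔ ((u ≠ v ∧ (u - v ∈ ({1,2,4} : Set (ZMod (3*k+1))) ∨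
        v - u ∈ ({1,2,4} : Set (ZMod (3*k+1))))) ∧
        ¬(s(u,v) = s(((1:ℕ) : ZMod (3*k+1)), ((2:ℕ) : ZMod (3*k+1))))) := by
      rw [show G' = (circGraph (3*k+1) {1,2,4}).deleteEdges
        {s(((1:ℕ) : ZMod (3*k+1)), ((2:ℕ) : ZMod (3*k+1)))} from rfl]
      rw [SimpleGraph.deleteEdges_adj, Set.mem_singleton_iff]
      unfold circGraph
      exact Iff.rfl
    rw [key, hne, hmem124 (u-v), hmem124 (v-u), Sym2.eq_iff,
      hdiff u v 1 (by omega), hdiff u v 2 (by omega), hdiff u v 4 (by omega),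
      hdiff v u 1 (by omega), hdiff v u 2 (by omega), hdiff v u 4 (by omega),
      hcast 1 (by omega) u, hcast 2 (by omega) u, hcast 1 (by omega) v,
      hcast 2 (by omega) v]
    unfold Stmt14Aux.adjN
    omega
  -- labelling of the complement
  have hlab_lt : ∀ v : ↥Sᶜ, Stmt14Aux.lab k (v.1).val < k - 1 := by
    intro v
    have h := Stmt14Aux.lab_classify hk ((hTmem v.1).mp v.2)
    omega
  let f : ↥Sᶜ → Fin (k-1) := fun v => ⟨Stmt14Aux.lab k (v.1).val, hlab_lt v⟩
  have hHadj : ∀ u v : ↥Sᶜ, (G'.induce Sᶜ).Adj u v ↔ G'.Adj u.1 v.1 := fun u v => Iff.rfl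
  have hf_adj : ∀ u v : ↥Sᶜ, (G'.induce Sᶜ).Adj u v → f u = f v := by
    intro u v h
    rw [hHadj, hadj] at h
    apply Fin.ext
    exact Stmt14Aux.lab_adj hk ((hTmem u.1).mp u.2) ((hTmem v.1).mp v.2) h.1 h.2.2
  have hf_walk : ∀ (u v : ↥Sᶜ) (p : (G'.induce Sᶜ).Walk u v), f u = f v := by
    intro u v p
    induction p with
    | nil => rfl
    | cons h _ ih => exact (hf_adj _ _ h).trans ih
  let F : (G'.induce Sᶜ).ConnectedComponent → Fin (k-1) :=
    SimpleGraph.ConnectedComponent.lift f (fun u v p _ => hf_walk u v p)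
  have hfdef : ∀ v : ↥Sᶜ, (f v).1 = Stmt14Aux.lab k (v.1).val := fun v => rfl
  have hreach : ∀ u v : ↥Sᶜ, f u = f v → (G'.induce Sᶜ).Reachable u v := by
    intro u v hf'
    have hu := Stmt14Aux.lab_classify hk ((hTmem u.1).mp u.2)
    have hv := Stmt14Aux.lab_classify hk ((hTmem v.1).mp v.2)
    have hlabeq : Stmt14Aux.lab k (u.1).val = Stmt14Aux.lab k (v.1).val := by
      rw [← hfdef, ← hfdef, hf']
    by_cases heq : (u.1).val = (v.1).val
    · have : u = v := Subtype.ext (ZMod.val_injective _ heq)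
      rw [this]
    · refine SimpleGraph.Adj.reachable ?_
      rw [hHadj, hadj]
      unfold Stmt14Aux.adjN
      refine ⟨?_, heq, ?_⟩ <;> omega
  have hFinj : Function.Injective F := by
    intro c1 c2
    refine SimpleGraph.ConnectedComponent.ind₂ (fun u v => ?_) c1 c2
    intro h
    exact SimpleGraph.ConnectedComponent.sound (hreach u v h)
  have hFsurj : Function.Surjective F := by
    intro j
    have hj : j.1 < k - 1 := j.2
    set m : ℕ := if j.1 = 0 then 2 else if j.1 = 1 then 1 else 3*j.1+1 with hm
    have hmlt : m < 3*k+1 := by rw [hm]; split_ifs <;> omega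
    have hmT : Stmt14Aux.inT k m := by
      rw [hm]; split_ifs with h1 h2
      · exact Or.inr (Or.inl rfl)
      · exact Or.inl rfl
      · exact Or.inr (Or.inr (Or.inr (Or.inr ⟨j.1, by omega, by omega, rfl⟩)))
    have hmlab : Stmt14Aux.lab k m = j.1 := by
      rw [hm]; unfold Stmt14Aux.lab; split_ifs <;> omega
    have hmS : ((m : ZMod (3*k+1))) ∈ Sᶜ := by
      rw [hTmem]; rwa [ZMod.val_cast_of_lt hmlt]
    refine ⟨SimpleGraph.connectedComponentMk _ ⟨(m : ZMod (3*k+1)), hmS⟩, ?_⟩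
    apply Fin.ext
    show Stmt14Aux.lab k ((m : ZMod (3*k+1)).val) = j.1
    rw [ZMod.val_cast_of_lt hmlt, hmlab]
  have hnum : numComp G' S = k - 1 := by
    unfold numComp
    rw [Nat.card_eq_of_bijective F ⟨hFinj, hFsurj⟩]
    simp
  have hcut : IsVertexCut G' S := by
    unfold IsVertexCut
    rw [hnum]; omega
  -- cardinality of S
  set SNfin : Finset ℕ := insert 0 (insert 3 (insert (3*k-1)
      ((Finset.Icc 2 (k-1)).biUnion fun t => ({3*t-1, 3*t} : Finset ℕ)))) with hSN
  have hSN_mem : ∀ m : ℕ, m ∈ SNfin ↔ Stmt14Aux.inS k m := by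
    intro m
    rw [hSN]
    simp only [Finset.mem_insert, Finset.mem_biUnion, Finset.mem_Icc, Finset.mem_singleton]
    unfold Stmt14Aux.inS
    constructor
    · rintro (h|h|h|⟨t,⟨h1,h2⟩,h3⟩)
      · exact Or.inr (Or.inr (Or.inl h))
      · exact Or.inl h
      · exact Or.inr (Or.inl h)
      · exact Or.inr (Or.inr (Or.inr ⟨t,h1,h2,h3⟩))
    · rintro (h|h|h|⟨t,h1,h2,h3⟩)
      · exact Or.inr (Or.inl h)
      · exact Or.inr (Or.inr (Or.inl h))
      · exact Or.inl h
      · exact Or.inr (Or.inr (Or.inr ⟨t,⟨h1,h2⟩,h3⟩))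
  have hSfin : S = ↑(Finset.image (fun m : ℕ => (m : ZMod (3*k+1))) SNfin) := by
    ext v
    rw [hSmem v, Finset.coe_image, Set.mem_image]
    constructor
    · intro h
      exact ⟨v.val, by rw [Finset.mem_coe, hSN_mem]; exact h, ZMod.natCast_zmod_val v⟩
    · rintro ⟨a, ha, rfl⟩
      rw [Finset.mem_coe, hSN_mem] at ha
      rwa [ZMod.val_cast_of_lt (Stmt14Aux.inS_lt hk ha)]
  have hpair : ∀ t ∈ Finset.Icc 2 (k-1), ({3*t-1, 3*t} : Finset ℕ).card = 2 := by
    intro t ht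
    rw [Finset.mem_Icc] at ht
    rw [Finset.card_insert_of_notMem (by simp; omega), Finset.card_singleton]
  have hcardbi : ((Finset.Icc 2 (k-1)).biUnion fun t => ({3*t-1, 3*t} : Finset ℕ)).card
      = 2*(k-2) := by
    rw [Finset.card_biUnion]
    · rw [Finset.sum_congr rfl hpair, Finset.sum_const, Nat.card_Icc, smul_eq_mul]
      omega
    · intro x hx y hy hxy
      rw [Finset.mem_coe, Finset.mem_Icc] at hx hy
      rw [Function.onFun, Finset.disjoint_left]
      intro a ha ha'
      simp only [Finset.mem_insert, Finset.mem_singleton] at ha ha'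
      omega
  have hSNcard : SNfin.card = 2*k-1 := by
    rw [hSN]
    rw [Finset.card_insert_of_notMem ?h0, Finset.card_insert_of_notMem ?h3,
      Finset.card_insert_of_notMem ?hkk, hcardbi]
    case h0 =>
      simp only [Finset.mem_insert, Finset.mem_biUnion, Finset.mem_Icc, Finset.mem_singleton]
      rintro (h|h|⟨t,⟨ht1,ht2⟩,h|h⟩) <;> omega
    case h3 =>
      simp only [Finset.mem_insert, Finset.mem_biUnion, Finset.mem_Icc, Finset.mem_singleton]
      rintro (h|⟨t,⟨ht1,ht2⟩,h|h⟩) <;> omega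
    case hkk =>
      simp only [Finset.mem_biUnion, Finset.mem_Icc, Finset.mem_insert, Finset.mem_singleton]
      rintro ⟨t,⟨ht1,ht2⟩,h|h⟩ <;> omega
    omega
  have hinjSN : Set.InjOn (fun m : ℕ => (m : ZMod (3*k+1))) ↑SNfin := by
    intro a ha b hb hab
    rw [Finset.mem_coe, hSN_mem] at ha hb
    have h2 : ((a : ZMod (3*k+1))).val = ((b : ZMod (3*k+1))).val := by
      simp only at hab
      rw [hab]
    rwa [ZMod.val_cast_of_lt (Stmt14Aux.inS_lt hk ha),
      ZMod.val_cast_of_lt (Stmt14Aux.inS_lt hk hb)] at h2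
  have hncard : S.ncard = 2*k-1 := by
    rw [hSfin, Set.ncard_coe_finset, Finset.card_image_of_injOn hinjSN, hSNcard]
  -- toughness bound
  have hkR : (3:ℝ) ≤ (k:ℝ) := by exact_mod_cast hk
  have hklt : (0:ℝ) < (k:ℝ) - 1 := by linarith
  have hcasteq : ((2*k-1 : ℕ) : ℝ) / ((k-1 : ℕ) : ℝ) = (2*(k:ℝ)-1)/((k:ℝ)-1) := by
    rw [Nat.cast_sub (by omega), Nat.cast_sub (by omega)]
    push_cast
    ring_nf
  have htough : toughness G' ≤ (2*(k:ℝ)-1)/((k:ℝ)-1) := by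
    have hmem : ((2*k-1 : ℕ) : ℝ) / ((k-1 : ℕ) : ℝ) ∈
        {x : ℝ | ∃ S' : Set (ZMod (3*k+1)), IsVertexCut G' S' ∧
          x = (S'.ncard : ℝ) / (numComp G' S' : ℝ)} :=
      ⟨S, hcut, by rw [hncard, hnum]⟩
    have hbdd : BddBelow {x : ℝ | ∃ S' : Set (ZMod (3*k+1)), IsVertexCut G' S' ∧
        x = (S'.ncard : ℝ) / (numComp G' S' : ℝ)} := by
      refine ⟨0, ?_⟩
      rintro x ⟨S', _, rfl⟩
      positivity
    have h4 := csInf_le hbdd hmem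
    rw [hcasteq] at h4
    exact h4
  have hfin : (2*(k:ℝ)-1)/((k:ℝ)-1) < (2*(k:ℝ))/((k:ℝ)-1) := by
    rw [div_lt_div_iff₀ hklt hklt]
    nlinarith
  exact ⟨hcut, hncard, hnum, htough, hfin⟩
end
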